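/- arXiv:1108.3829 — 9 statements merged into one kernel-verified Lean document; each statement's English description precedes it below -/
import Mathlib

section
/- Let λ > 0 and let Θ̂ be a graphical lasso solution at λ for S. Then for all vertices i, j ∈ {1,…,p}: i and j lie in the same connected component of the thresholded sample covariance graph G^(λ) if and only if i and j lie in the same connected component of the estimated concentration graph Ĝ^(λ). In particular, the vertex-partition induced by the connected components of G^(λ) is exactly equal to the vertex-partition induced by the connected components of Ĝ^(λ). -/
open Matrix

/-- The graphical lasso objective: `f(Θ) = -log det Θ + tr(AΘ) + λ ∑_{i,j} |Θ_ij|`. -/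
noncomputable def glassoObj {n : Type*} [Fintype n] [DecidableEq n]
    (lam : ℝ) (A Θ : Matrix n n ℝ) : ℝ :=
  -Real.log Θ.det + (A * Θ).trace + lam * ∑ i, ∑ j, |Θ i j|

/-- `Θ` is a graphical lasso solution at `lam` for `A`: it is (symmetric) positive definite and
minimizes the graphical lasso objective over all symmetric positive definite matrices.
(Over `ℝ`, `Matrix.PosDef` includes symmetry.) -/
def IsGlassoSol {n : Type*} [Fintype n] [DecidableEq n]
    (lam : ℝ) (A Θ : Matrix n n ℝ) : Prop :=
  Θ.PosDef ∧ ∀ Ψ : Matrix n n ℝ, Ψ.PosDef → glassoObj lam A Θ ≤ glassoObj lam A Ψ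

/-- The thresholded sample covariance graph: an edge between distinct `i, j` iff `|S i j| > lam`. -/
def covGraph {n : Type*} (lam : ℝ) (S : Matrix n n ℝ) : SimpleGraph n :=
  SimpleGraph.fromRel (fun i j => lam < |S i j|)

/-- The estimated concentration graph: an edge between distinct `i, j` iff `Θ i j ≠ 0`. -/
def concGraph {n : Type*} (Θ : Matrix n n ℝ) : SimpleGraph n :=
  SimpleGraph.fromRel (fun i j => Θ i j ≠ 0)

/-!
If `i` and `j` lie in different components of the thresholded covariance graph then
`|S i j| ≤ λ`, so zeroing every entry of `Θ̂` that joins two such components does not increase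
`tr (S Θ) + λ ‖Θ‖₁`, while by the strict Fischer inequality it strictly increases `det Θ` unless
`Θ̂` is already block diagonal. Conversely, `Θ̂` is block diagonal along the components of its own
graph, hence so is `Θ̂⁻¹`, and the first-order optimality condition `|S i j - Θ̂⁻¹ i j| ≤ λ`
gives `|S i j| ≤ λ` across those components. So the edges of each graph stay inside the
components of the other.
-/

open Filter Topology

theorem abs_le_of_hasDerivAt_of_eventually_le {f : ℝ → ℝ} {d c : ℝ} (hf : HasDerivAt f d 0)
    (h : ∀ᶠ t in 𝓝 0, f 0 ≤ f t + c * |t|) : |d| ≤ c := by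
  rw [hasDerivAt_iff_tendsto_slope] at hf
  refine abs_le.2 ⟨?_, ?_⟩
  · refine ge_of_tendsto
      (hf.mono_left (nhdsWithin_mono _ fun t ht => ne_of_gt ht) : Tendsto _ (𝓝[>] (0 : ℝ)) _) ?_
    filter_upwards [self_mem_nhdsWithin, nhdsWithin_le_nhds h] with t (ht : 0 < t) hft
    rw [slope_def_field, sub_zero, le_div_iff₀ ht]
    rw [abs_of_pos ht] at hft
    linarith
  · refine le_of_tendsto
      (hf.mono_left (nhdsWithin_mono _ fun t ht => ne_of_lt ht) : Tendsto _ (𝓝[<] (0 : ℝ)) _) ?_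
    filter_upwards [self_mem_nhdsWithin, nhdsWithin_le_nhds h] with t (ht : t < 0) hft
    rw [slope_def_field, sub_zero, div_le_iff_of_neg ht]
    rw [abs_of_neg ht] at hft
    linarith

namespace Matrix

section Analysis

variable {n : Type*} [Fintype n]

theorem abs_dotProduct_mulVec_le (E : Matrix n n ℝ) (x : n → ℝ) :
    |x ⬝ᵥ E *ᵥ x| ≤ (∑ i, ∑ j, |E i j|) * (x ⬝ᵥ x) := by
  have hsq : ∀ i, x i * x i ≤ x ⬝ᵥ x := fun i =>
    Finset.single_le_sum (f := fun k => x k * x k) (fun k _ => mul_self_nonneg _)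
      (Finset.mem_univ i)
  have hentry : ∀ i j, |x i * (E i j * x j)| ≤ |E i j| * (x ⬝ᵥ x) := fun i j => by
    rw [abs_mul, abs_mul]
    nlinarith [hsq i, hsq j, abs_nonneg (E i j), abs_mul_abs_self (x i), abs_mul_abs_self (x j),
      sq_nonneg (|x i| - |x j|)]
  calc |x ⬝ᵥ E *ᵥ x| = |∑ i, ∑ j, x i * (E i j * x j)| := by
        simp only [dotProduct, mulVec, Finset.mul_sum]
    _ ≤ ∑ i, ∑ j, |x i * (E i j * x j)| :=
        (Finset.abs_sum_le_sum_abs _ _).trans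
          (Finset.sum_le_sum fun i _ => Finset.abs_sum_le_sum_abs _ _)
    _ ≤ ∑ i, ∑ j, |E i j| * (x ⬝ᵥ x) :=
        Finset.sum_le_sum fun i _ => Finset.sum_le_sum fun j _ => hentry i j
    _ = (∑ i, ∑ j, |E i j|) * (x ⬝ᵥ x) := by simp only [Finset.sum_mul]

variable [DecidableEq n]

open scoped MatrixOrder in
theorem PosDef.exists_posSemidef_sub_smul_one {A : Matrix n n ℝ} (hA : A.PosDef) :
    ∃ r : ℝ, 0 < r ∧ (A - r • 1).PosSemidef := by
  cases isEmpty_or_nonempty n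
  · exact ⟨1, one_pos, Subsingleton.elim (0 : Matrix n n ℝ) (A - (1 : ℝ) • 1) ▸ .zero⟩
  obtain ⟨r, hr, hrA⟩ := (CFC.exists_pos_algebraMap_le_iff hA.isStrictlyPositive.isSelfAdjoint).2
    fun _ hx => hA.isStrictlyPositive.spectrum_pos hx
  exact ⟨r, hr, by simpa [Algebra.algebraMap_eq_smul_one] using Matrix.le_iff.1 hrA⟩

theorem PosDef.eventually_add_smul {A E : Matrix n n ℝ} (hA : A.PosDef) (hE : E.IsHermitian) :
    ∀ᶠ t in 𝓝 (0 : ℝ), (A + t • E).PosDef := by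
  obtain ⟨r, hr, hAr⟩ := hA.exists_posSemidef_sub_smul_one
  set K := ∑ i, ∑ j, |E i j|
  have hsmall : ∀ᶠ t in 𝓝 (0 : ℝ), |t| * K < r :=
    ((continuous_abs.mul continuous_const).tendsto 0).eventually_lt_const (by simpa using hr)
  filter_upwards [hsmall] with t ht
  refine .of_dotProduct_mulVec_pos (hA.1.add (hE.smul (IsSelfAdjoint.all t))) fun x hx => ?_
  have hx2 : 0 < x ⬝ᵥ x := by simpa using dotProduct_self_star_pos_iff.2 hx
  have hAx := hAr.dotProduct_mulVec_nonneg x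
  simp only [star_trivial, sub_mulVec, smul_mulVec, one_mulVec, dotProduct_sub, dotProduct_smul,
    smul_eq_mul, add_mulVec, dotProduct_add] at hAx ⊢
  have htE : -(|t| * K * (x ⬝ᵥ x)) ≤ t * (x ⬝ᵥ E *ᵥ x) := by
    have := mul_le_mul_of_nonneg_left (abs_dotProduct_mulVec_le E x) (abs_nonneg t)
    rw [← abs_mul] at this
    linarith [neg_abs_le (t * (x ⬝ᵥ E *ᵥ x))]
  linarith [mul_pos (sub_pos.2 ht) hx2]

open Polynomial in
theorem hasDerivAt_det_one_add_smul {𝕜 : Type*} [NontriviallyNormedField 𝕜] (M : Matrix n n 𝕜) :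
    HasDerivAt (fun t : 𝕜 => (1 + t • M).det) M.trace 0 := by
  have heval : ∀ t : 𝕜, (1 + t • M).det = (det (1 + (X : 𝕜[X]) • M.map C)).eval t := fun t => by
    rw [← coe_evalRingHom, RingHom.map_det]
    congr 1
    ext i j
    by_cases h : i = j <;> simp [h] <;> ring
  have h := (det (1 + (X : 𝕜[X]) • M.map C)).hasDerivAt 0
  rw [derivative_det_one_add_X_smul] at h
  simpa only [heval] using h

theorem hasDerivAt_log_det_add_smul {A : Matrix n n ℝ} (hA : A.det ≠ 0) (E : Matrix n n ℝ) :
    HasDerivAt (fun t : ℝ => Real.log (A + t • E).det) (A⁻¹ * E).trace 0 := by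
  have hfac : ∀ t : ℝ, (A + t • E).det = A.det * (1 + t • (A⁻¹ * E)).det := fun t => by
    rw [← det_mul, mul_add, mul_one, mul_smul_comm,
      mul_nonsing_inv_cancel_left _ _ (isUnit_iff_ne_zero.2 hA)]
  have hdet : HasDerivAt (fun t : ℝ => (A + t • E).det) (A.det * (A⁻¹ * E).trace) 0 := by
    simpa only [hfac] using (hasDerivAt_det_one_add_smul (A⁻¹ * E)).const_mul A.det
  convert hdet.log (by simpa using hA) using 1
  simp [hA]

theorem PosDef.det_lt_one_of_trace_eq {M : Matrix n n ℝ} (hM : M.PosDef)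
    (htr : M.trace = Fintype.card n) (hne : M ≠ 1) : M.det < 1 := by
  set μ := hM.1.eigenvalues
  have hμ : ∀ i, 0 < μ i := hM.eigenvalues_pos
  obtain ⟨i₀, hi₀⟩ : ∃ i, μ i ≠ 1 := by
    by_contra! h
    refine hne ?_
    calc M = cfc id M := (cfc_id ℝ M hM.1.isSelfAdjoint).symm
      _ = cfc (fun _ => (1 : ℝ)) M := cfc_congr fun x hx => by
          obtain ⟨i, rfl⟩ := hM.1.spectrum_real_eq_range_eigenvalues ▸ hx
          exact h i
      _ = 1 := by rw [cfc_const (1 : ℝ) M hM.1.isSelfAdjoint, map_one]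
  have hsum : ∑ i, μ i = Fintype.card n := by
    simpa [μ] using hM.1.trace_eq_sum_eigenvalues.symm.trans htr
  have hlog : Real.log M.det < 0 := by
    rw [hM.1.det_eq_prod_eigenvalues]
    simp only [RCLike.ofReal_real_eq_id, id]
    rw [Real.log_prod fun i _ => (hμ i).ne']
    calc ∑ i, Real.log (μ i) < ∑ i, (μ i - 1) :=
          Finset.sum_lt_sum (fun i _ => Real.log_le_sub_one_of_pos (hμ i))
            ⟨i₀, Finset.mem_univ _, Real.log_lt_sub_one_of_pos (hμ i₀) hi₀⟩
      _ = 0 := by simp [Finset.sum_sub_distrib, hsum]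
  exact (Real.log_neg_iff hM.det_pos).1 hlog

open scoped MatrixOrder in
/-- Conjugating by `A ^ (-1/2)` reduces this to `PosDef.det_lt_one_of_trace_eq`. -/
theorem PosDef.det_lt_of_trace_inv_mul_eq {A B : Matrix n n ℝ} (hA : A.PosDef) (hB : B.PosDef)
    (htr : (A⁻¹ * B).trace = Fintype.card n) (hne : B ≠ A) : B.det < A.det := by
  set Q := CFC.sqrt A
  have hQ : Q.PosDef := (IsStrictlyPositive.sqrt A hA.isStrictlyPositive).posDef
  have hQQ : Q * Q = A := CFC.sqrt_mul_sqrt_self A hA.posSemidef.nonneg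
  have hQu : IsUnit Q.det := (isUnit_iff_isUnit_det Q).1 hQ.isUnit
  set M := Q⁻¹ * B * Q⁻¹
  have hM : M.PosDef := by
    have := hB.conjTranspose_mul_mul_same (mulVec_injective_of_isUnit hQ.inv.isUnit)
    rwa [conjTranspose_nonsing_inv, hQ.1.eq] at this
  have htrM : M.trace = Fintype.card n := by
    rw [← htr, ← hQQ, mul_inv_rev, trace_mul_comm, ← Matrix.mul_assoc]
  have hM1 : M ≠ 1 := fun h => hne <| by
    calc B = Q * M * Q := by
          simp only [M, ← Matrix.mul_assoc, mul_nonsing_inv _ hQu, Matrix.one_mul]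
          rw [Matrix.mul_assoc, nonsing_inv_mul _ hQu, Matrix.mul_one]
      _ = A := by rw [h, Matrix.mul_one, hQQ]
  have hdet : B.det = M.det * A.det := by
    rw [← hQQ]
    simp only [M, det_mul, det_nonsing_inv, Ring.inverse_eq_inv']
    field_simp [hQu.ne_zero]
  rw [hdet]
  nlinarith [hM.det_lt_one_of_trace_eq htrM hM1, hA.det_pos]

end Analysis

section BlockMask

variable {n α R : Type*}

open Classical in
noncomputable def blockMask [Zero R] (c : n → α) (M : Matrix n n R) : Matrix n n R :=
  of fun i j => if c i = c j then M i j else 0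

variable {c : n → α} {i j : n}

theorem blockMask_apply_of_eq [Zero R] (M : Matrix n n R) (h : c i = c j) :
    blockMask c M i j = M i j := by
  simp [blockMask, h]

theorem blockMask_apply_of_ne [Zero R] (M : Matrix n n R) (h : c i ≠ c j) :
    blockMask c M i j = 0 := by
  simp [blockMask, h]

theorem blockMask_blockMask [Zero R] (M : Matrix n n R) :
    blockMask c (blockMask c M) = blockMask c M := by
  ext i j
  by_cases h : c i = c j
  · rw [blockMask_apply_of_eq _ h, blockMask_apply_of_eq _ h]
  · rw [blockMask_apply_of_ne _ h, blockMask_apply_of_ne _ h]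

theorem blockMask_one [Zero R] [One R] [DecidableEq n] :
    blockMask c (1 : Matrix n n R) = 1 := by
  ext i j
  by_cases h : c i = c j
  · rw [blockMask_apply_of_eq _ h]
  · rw [blockMask_apply_of_ne _ h, one_apply_ne (fun hij => h (congrArg c hij))]

theorem mul_blockMask_of_blockMask_eq [Fintype n] [NonUnitalNonAssocSemiring R]
    {M : Matrix n n R} (hM : blockMask c M = M) (N : Matrix n n R) :
    M * blockMask c N = blockMask c (M * N) := by
  have hM0 : ∀ i j, c i ≠ c j → M i j = 0 := fun i j h => by
    rw [← hM]
    exact blockMask_apply_of_ne M h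
  ext i k
  rw [mul_apply]
  by_cases h : c i = c k
  · rw [blockMask_apply_of_eq _ h, mul_apply]
    refine Finset.sum_congr rfl fun j _ => ?_
    by_cases hj : c j = c k
    · rw [blockMask_apply_of_eq _ hj]
    · rw [hM0 i j (fun h' => hj (h'.symm.trans h)), zero_mul, zero_mul]
  · rw [blockMask_apply_of_ne _ h]
    refine Finset.sum_eq_zero fun j _ => ?_
    by_cases hj : c j = c k
    · rw [hM0 i j (fun h' => h (h'.trans hj)), zero_mul]
    · rw [blockMask_apply_of_ne _ hj, mul_zero]

theorem blockMask_inv [Fintype n] [DecidableEq n] [CommRing R] {M : Matrix n n R}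
    (hM : blockMask c M = M) : blockMask c M⁻¹ = M⁻¹ := by
  by_cases hdet : IsUnit M.det
  · refine (inv_eq_right_inv ?_).symm
    rw [mul_blockMask_of_blockMask_eq hM, mul_nonsing_inv _ hdet, blockMask_one]
  · ext i j
    simp [nonsing_inv_apply_not_isUnit _ hdet, blockMask]

theorem trace_blockMask_mul [Fintype n] [NonUnitalNonAssocSemiring R] (M N : Matrix n n R) :
    (blockMask c M * N).trace = (M * blockMask c N).trace := by
  simp only [trace, diag_apply, mul_apply]
  refine Finset.sum_congr rfl fun i _ => Finset.sum_congr rfl fun j _ => ?_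
  by_cases h : c i = c j
  · rw [blockMask_apply_of_eq _ h, blockMask_apply_of_eq _ h.symm]
  · rw [blockMask_apply_of_ne _ h, blockMask_apply_of_ne _ (Ne.symm h), zero_mul, mul_zero]

/-- The indicator matrix of `c i = c j` is the Gram matrix of the indicator vectors of the
representatives `invFun c (c i)`. -/
theorem posSemidef_blockMask_ones [Fintype n] :
    (blockMask c (of fun _ _ => (1 : ℝ)) : Matrix n n ℝ).PosSemidef := by
  classical
  cases isEmpty_or_nonempty n
  · rw [Subsingleton.elim (blockMask c _) 0]
    exact .zero
  set r : n → n := fun i => Function.invFun c (c i)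
  have hr : ∀ i j, r i = r j ↔ c i = c j := fun i j =>
    ⟨fun h => by simpa [r, Function.invFun_eq ⟨_, rfl⟩] using congrArg c h,
      fun h => by simp [r, h]⟩
  convert posSemidef_conjTranspose_mul_self (of fun k i => if k = r i then (1 : ℝ) else 0) using 1
  ext i j
  simp [blockMask, mul_apply, ← hr, eq_comm]

variable [Fintype n] [DecidableEq n]

theorem posDef_blockMask {M : Matrix n n ℝ} (hM : M.PosDef) : (blockMask c M).PosDef := by
  obtain ⟨r, hr, hMr⟩ := hM.exists_posSemidef_sub_smul_one
  have hsplit : blockMask c M = (M - r • 1) ⊙ blockMask c (of fun _ _ => 1) + r • 1 := by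
    ext i j
    by_cases h : c i = c j
    · by_cases hij : i = j
      · subst hij
        simp [blockMask_apply_of_eq]
      · simp [blockMask_apply_of_eq _ h, one_apply_ne hij]
    · simp [blockMask_apply_of_ne _ h, one_apply_ne (fun hij => h (congrArg c hij))]
  rw [hsplit]
  exact PosDef.posSemidef_add (hMr.hadamard posSemidef_blockMask_ones) (PosDef.one.smul hr)

/-- The strict Fischer inequality. -/
theorem det_lt_det_blockMask {M : Matrix n n ℝ} (hM : M.PosDef) (hne : blockMask c M ≠ M) :
    M.det < (blockMask c M).det := by
  have hA := posDef_blockMask (c := c) hM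
  refine hA.det_lt_of_trace_inv_mul_eq hM ?_ hne.symm
  rw [← blockMask_inv (blockMask_blockMask M), trace_blockMask_mul,
    nonsing_inv_mul _ ((isUnit_iff_isUnit_det _).1 hA.isUnit), trace_one]

end BlockMask

end Matrix

namespace IsGlassoSol

variable {n : Type*} [Fintype n] [DecidableEq n] {lam : ℝ} {S Θ : Matrix n n ℝ}

theorem abs_trace_sub_inv_mul_le (h : IsGlassoSol lam S Θ) (hlam : 0 ≤ lam)
    {E : Matrix n n ℝ} (hE : E.IsHermitian) :
    |((S - Θ⁻¹) * E).trace| ≤ lam * ∑ i, ∑ j, |E i j| := by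
  obtain ⟨hΘ, hmin⟩ := h
  set f : ℝ → ℝ := fun t => -Real.log (Θ + t • E).det + t * (S * E).trace
  have hf : HasDerivAt f ((S - Θ⁻¹) * E).trace 0 := by
    refine ((hasDerivAt_log_det_add_smul hΘ.det_pos.ne' E).neg.add
      ((hasDerivAt_id' 0).mul_const (S * E).trace)).congr_deriv ?_
    rw [sub_mul, trace_sub]
    ring
  refine abs_le_of_hasDerivAt_of_eventually_le hf ?_
  filter_upwards [hΘ.eventually_add_smul hE] with t ht
  have hl1 : ∑ i, ∑ j, |(Θ + t • E) i j| ≤ ∑ i, ∑ j, |Θ i j| + |t| * ∑ i, ∑ j, |E i j| := by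
    simp only [Finset.mul_sum, ← Finset.sum_add_distrib]
    gcongr with i _ j _
    simpa [abs_mul] using abs_add_le (Θ i j) (t * E i j)
  have hobj := hmin _ ht
  simp only [glassoObj, mul_add, trace_add, Matrix.mul_smul, trace_smul, smul_eq_mul] at hobj
  simp only [f, zero_smul, add_zero, zero_mul]
  nlinarith [mul_le_mul_of_nonneg_left hl1 hlam]

theorem abs_sub_inv_apply_le (h : IsGlassoSol lam S Θ) (hlam : 0 ≤ lam) (hS : S.IsHermitian)
    (a b : n) : |S a b - Θ⁻¹ a b| ≤ lam := by
  set E : Matrix n n ℝ := single a b 1 + single b a 1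
  have hE : E.IsHermitian := by
    simp [E, IsHermitian, add_comm]
  have htr : ((S - Θ⁻¹) * E).trace = 2 * (S a b - Θ⁻¹ a b) := by
    have hW := h.1.inv.1.apply a b
    have hS' := hS.apply a b
    simp only [star_trivial] at hW hS'
    simp [E, mul_add, trace_add, trace_mul_single, hW, hS']
    ring
  have hE1 : ∑ i, ∑ j, |E i j| ≤ 2 := by
    calc ∑ i, ∑ j, |E i j|
        ≤ ∑ i, ∑ j, (|single a b (1 : ℝ) i j| + |single b a (1 : ℝ) i j|) := by
          gcongr with i _ j _
          exact abs_add_le _ _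
      _ = 2 := by
          simp only [Finset.sum_add_distrib]
          simp [single_apply, ite_and, apply_ite (abs : ℝ → ℝ)]
          norm_num
  have := h.abs_trace_sub_inv_mul_le hlam hE
  rw [htr, abs_mul, abs_two] at this
  nlinarith [mul_le_mul_of_nonneg_left hE1 hlam]

variable {α : Type*} {c : n → α}

theorem blockMask_eq (h : IsGlassoSol lam S Θ) (hS : ∀ i j, c i ≠ c j → |S i j| ≤ lam) :
    blockMask c Θ = Θ := by
  by_contra hne
  have hlin : (S * blockMask c Θ).trace + lam * ∑ i, ∑ j, |blockMask c Θ i j|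
      ≤ (S * Θ).trace + lam * ∑ i, ∑ j, |Θ i j| := by
    have hsum : ∀ M : Matrix n n ℝ, (S * M).trace + lam * ∑ i, ∑ j, |M i j|
        = ∑ i, ∑ j, (S i j * M j i + lam * |M j i|) := fun M => by
      rw [Finset.sum_comm (f := fun i j => |M i j|)]
      simp only [trace, diag_apply, mul_apply, Finset.mul_sum, Finset.sum_add_distrib]
    rw [hsum, hsum]
    refine Finset.sum_le_sum fun i _ => Finset.sum_le_sum fun j _ => ?_
    by_cases hij : c i = c j
    · rw [blockMask_apply_of_eq _ hij.symm]
    · rw [blockMask_apply_of_ne _ (Ne.symm hij), mul_zero, abs_zero, mul_zero, add_zero]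
      nlinarith [neg_abs_le (S i j * Θ j i), abs_mul (S i j) (Θ j i),
        mul_le_mul_of_nonneg_right (hS i j hij) (abs_nonneg (Θ j i))]
  have hmin := h.2 _ (posDef_blockMask (c := c) h.1)
  simp only [glassoObj] at hmin
  linarith [Real.log_lt_log h.1.det_pos (det_lt_det_blockMask h.1 hne)]

theorem abs_le_of_blockMask_eq (h : IsGlassoSol lam S Θ) (hlam : 0 ≤ lam) (hS : S.IsHermitian)
    (hΘ : blockMask c Θ = Θ) {a b : n} (hab : c a ≠ c b) : |S a b| ≤ lam := by
  have := h.abs_sub_inv_apply_le hlam hS a b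
  rwa [← blockMask_inv hΘ, blockMask_apply_of_ne _ hab, sub_zero] at this

end IsGlassoSol

theorem SimpleGraph.Reachable.eq_of_forall_adj {V α : Type*} {G : SimpleGraph V} {c : V → α}
    (hc : ∀ u v, G.Adj u v → c u = c v) {u v : V} (h : G.Reachable u v) : c u = c v := by
  obtain ⟨p⟩ := h
  induction p with
  | nil => rfl
  | cons hadj _ ih => exact (hc _ _ hadj).trans ih

section Graphs

variable {n α : Type*} {c : n → α} {i j : n}

theorem eq_of_covGraph_adj {lam : ℝ} {S : Matrix n n ℝ} (hS : ∀ i j, c i ≠ c j → |S i j| ≤ lam)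
    (h : (covGraph lam S).Adj i j) : c i = c j := by
  by_contra hne
  rw [covGraph, SimpleGraph.fromRel_adj] at h
  rcases h.2 with h' | h'
  · exact (hS i j hne).not_gt h'
  · exact (hS j i (Ne.symm hne)).not_gt h'

theorem eq_of_concGraph_adj {Θ : Matrix n n ℝ} (hΘ : blockMask c Θ = Θ)
    (h : (concGraph Θ).Adj i j) : c i = c j := by
  by_contra hne
  rw [concGraph, SimpleGraph.fromRel_adj] at h
  rcases h.2 with h' | h'
  · exact h' (hΘ ▸ blockMask_apply_of_ne Θ hne)
  · exact h' (hΘ ▸ blockMask_apply_of_ne Θ (Ne.symm hne))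

theorem abs_le_of_not_reachable_covGraph {lam : ℝ} {S : Matrix n n ℝ}
    (h : ¬(covGraph lam S).Reachable i j) : |S i j| ≤ lam := by
  have hij : i ≠ j := fun hij => h (hij ▸ .rfl)
  by_contra hlt
  refine h (SimpleGraph.Adj.reachable ?_)
  rw [covGraph, SimpleGraph.fromRel_adj]
  exact ⟨hij, .inl (not_le.1 hlt)⟩

theorem blockMask_connectedComponentMk_concGraph (Θ : Matrix n n ℝ) :
    blockMask (concGraph Θ).connectedComponentMk Θ = Θ := by
  ext i j
  by_cases h : (concGraph Θ).connectedComponentMk i = (concGraph Θ).connectedComponentMk j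
  · exact blockMask_apply_of_eq Θ h
  · rw [blockMask_apply_of_ne Θ h]
    by_contra hne
    refine h (SimpleGraph.ConnectedComponent.eq.2 (SimpleGraph.Adj.reachable ?_))
    rw [concGraph, SimpleGraph.fromRel_adj]
    exact ⟨fun hij => h (hij ▸ rfl), .inl (Ne.symm hne)⟩

end Graphs

theorem glasso_thresholding_component_equivalence_general
    (p : ℕ) (S : Matrix (Fin p) (Fin p) ℝ) (hS : S.PosSemidef)
    (lam : ℝ) (hlam : 0 < lam)
    (Θ : Matrix (Fin p) (Fin p) ℝ) (hΘ : IsGlassoSol lam S Θ) :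
    ∀ i j : Fin p,
      (covGraph lam S).Reachable i j ↔ (concGraph Θ).Reachable i j := by
  open SimpleGraph in
  have hblock : blockMask (covGraph lam S).connectedComponentMk Θ = Θ :=
    hΘ.blockMask_eq fun i j hij =>
      abs_le_of_not_reachable_covGraph (mt ConnectedComponent.eq.2 hij)
  have hthreshold : ∀ i j, (concGraph Θ).connectedComponentMk i ≠
      (concGraph Θ).connectedComponentMk j → |S i j| ≤ lam := fun i j =>
    hΘ.abs_le_of_blockMask_eq hlam.le hS.1 (blockMask_connectedComponentMk_concGraph Θ)
  refine fun i j => ⟨fun h => ?_, fun h => ?_⟩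
  · exact ConnectedComponent.eq.1 (h.eq_of_forall_adj fun _ _ => eq_of_covGraph_adj hthreshold)
  · exact ConnectedComponent.eq.1 (h.eq_of_forall_adj fun _ _ => eq_of_concGraph_adj hblock)

/-- the connected components of the thresholded sample covariance graph and of the
estimated concentration graph induce exactly the same vertex partition. -/
theorem glasso_thresholding_component_equivalence
    (p : ℕ) (hp : 1 ≤ p) (S : Matrix (Fin p) (Fin p) ℝ) (hS : S.PosSemidef)
    (lam : ℝ) (hlam : 0 < lam)
    (Θ : Matrix (Fin p) (Fin p) ℝ) (hΘ : IsGlassoSol lam S Θ) :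
    ∀ i j : Fin p,
      (covGraph lam S).Reachable i j ↔ (concGraph Θ).Reachable i j :=
  glasso_thresholding_component_equivalence_general p S hS lam hlam Θ hΘ
end

section
/- Let λ > 0 and suppose V₁,…,V_K is a partition of {1,…,p} such that |S_ij| ≤ λ whenever i and j lie in distinct blocks of the partition. For each ℓ, let Θ̂_ℓ be a graphical lasso solution at λ for the principal submatrix S[V_ℓ, V_ℓ]. Then the block-diagonal matrix Θ̂ defined by Θ̂[V_ℓ, V_ℓ] = Θ̂_ℓ for each ℓ and Θ̂_ij = 0 whenever i and j lie in distinct blocks is a graphical lasso solution at λ for S. -/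
open Matrix

/-!
For a block-diagonal matrix the graphical lasso objective splits into the objectives of its
diagonal blocks, so `Θ` beats every block-diagonal competitor. A general competitor `Ψ` is in
turn beaten by its block-diagonal part `B`: Fischer's inequality gives `det Ψ ≤ det B`, and each
off-block entry adds `S i j * Ψ j i + λ * |Ψ i j| ≥ 0` to the objective of `Ψ` because
`|S i j| ≤ λ`.
-/

open Finset

namespace Matrix

variable {n ι R : Type*}

def IsBlockDiagonal [Zero R] (b : n → ι) (M : Matrix n n R) : Prop :=
  ∀ i j, b i ≠ b j → M i j = 0

def blockDiagonalPart [Zero R] [DecidableEq ι] (b : n → ι) (M : Matrix n n R) : Matrix n n R :=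
  of fun i j => if b i = b j then M i j else 0

theorem trace_mul_eq_sum_sum [Fintype n] [NonUnitalNonAssocSemiring R] (A B : Matrix n n R) :
    (A * B).trace = ∑ i, ∑ j, A i j * B j i := by
  simp only [trace, diag, mul_apply]

theorem dotProduct_mulVec_eq_sum_sum [Fintype n] [NonUnitalCommSemiring R] [Star R]
    (M : Matrix n n R) (x : n → R) :
    star x ⬝ᵥ M *ᵥ x = ∑ i, ∑ j, star (x i) * M i j * x j := by
  simp only [dotProduct, mulVec, mul_sum, Pi.star_apply, mul_assoc]

section blockDiagonalPart

variable [Zero R] [DecidableEq ι] {b : n → ι}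

theorem isBlockDiagonal_blockDiagonalPart (M : Matrix n n R) :
    IsBlockDiagonal b (blockDiagonalPart b M) :=
  fun _ _ h => if_neg h

@[simp]
theorem toSquareBlock_blockDiagonalPart (M : Matrix n n R) (ℓ : ι) :
    (blockDiagonalPart b M).toSquareBlock b ℓ = M.toSquareBlock b ℓ := by
  ext i j
  simp [blockDiagonalPart, toSquareBlock_def, i.2, j.2]

end blockDiagonalPart

namespace IsBlockDiagonal

variable {b : n → ι}

theorem map [Zero R] {S : Type*} [Zero S] {M : Matrix n n R} (hM : IsBlockDiagonal b M)
    {f : R → S} (hf : f 0 = 0) : IsBlockDiagonal b (M.map f) :=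
  fun i j h => by simp [hM i j h, hf]

theorem blockTriangular [Zero R] [Preorder ι] {M : Matrix n n R} (hM : IsBlockDiagonal b M) :
    M.BlockTriangular b :=
  fun i j h => hM i j h.ne'

theorem sum_sum [Fintype n] [Fintype ι] [DecidableEq ι] [AddCommMonoid R] {F : Matrix n n R}
    (hF : IsBlockDiagonal b F) :
    ∑ i, ∑ j, F i j = ∑ ℓ, ∑ i, ∑ j, F.toSquareBlock b ℓ i j := by
  rw [← Fintype.sum_fiberwise b]
  refine sum_congr rfl fun ℓ _ => sum_congr rfl fun i _ => ?_
  rw [← Fintype.sum_subtype_add_sum_subtype (b · = ℓ),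
    Fintype.sum_eq_zero (fun j : {j // b j ≠ ℓ} => F i j) fun j => hF i j fun h => j.2 (h ▸ i.2),
    add_zero]
  rfl

theorem trace_mul [Fintype n] [Fintype ι] [DecidableEq ι] [NonUnitalNonAssocSemiring R]
    (A : Matrix n n R) {M : Matrix n n R} (hM : IsBlockDiagonal b M) :
    (A * M).trace = ∑ ℓ, (A.toSquareBlock b ℓ * M.toSquareBlock b ℓ).trace := by
  have hF : IsBlockDiagonal b (of fun i j => A i j * M j i) :=
    fun i j h => by simp [hM j i (Ne.symm h)]
  simp only [trace_mul_eq_sum_sum]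
  exact hF.sum_sum

theorem det [Fintype n] [DecidableEq n] [Fintype ι] [LinearOrder ι] [CommRing R]
    {M : Matrix n n R} (hM : IsBlockDiagonal b M) :
    M.det = ∏ ℓ, (M.toSquareBlock b ℓ).det :=
  hM.blockTriangular.det_fintype

theorem inv [Fintype n] [DecidableEq n] [LinearOrder ι] [CommRing R]
    {M : Matrix n n R} (hM : IsBlockDiagonal b M) : IsBlockDiagonal b M⁻¹ := by
  by_cases hdet : IsUnit M.det
  · have := M.invertibleOfIsUnitDet hdet
    intro i j hij
    rcases hij.lt_or_gt with hlt | hgt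
    · exact blockTriangular_inv_of_blockTriangular (b := OrderDual.toDual ∘ b)
        (fun i j h => hM i j (OrderDual.toDual_lt_toDual.mp h).ne) hlt
    · exact blockTriangular_inv_of_blockTriangular hM.blockTriangular hgt
  · rw [nonsing_inv_apply_not_isUnit M hdet]
    exact fun _ _ _ => rfl

theorem dotProduct_mulVec [Fintype n] [Fintype ι] [DecidableEq ι] [CommRing R] [StarRing R]
    {M : Matrix n n R} (hM : IsBlockDiagonal b M) (x : n → R) :
    star x ⬝ᵥ M *ᵥ x =
      ∑ ℓ, star (fun i : {i // b i = ℓ} => x i) ⬝ᵥ M.toSquareBlock b ℓ *ᵥ fun i => x i := by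
  have hF : IsBlockDiagonal b (of fun i j => star (x i) * M i j * x j) :=
    fun i j h => by simp [hM i j h]
  simp only [dotProduct_mulVec_eq_sum_sum]
  exact hF.sum_sum

theorem isHermitian [CommRing R] [StarRing R] {M : Matrix n n R} (hM : IsBlockDiagonal b M)
    (hblocks : ∀ ℓ, (M.toSquareBlock b ℓ).IsHermitian) : M.IsHermitian := by
  ext i j
  by_cases h : b j = b i
  · exact congr_fun₂ (hblocks (b i)) ⟨i, rfl⟩ ⟨j, h⟩
  · simp [hM i j (Ne.symm h), hM j i h]

theorem posDef [Fintype n] [Fintype ι] [DecidableEq ι] [CommRing R] [PartialOrder R] [StarRing R]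
    [IsOrderedCancelAddMonoid R] {M : Matrix n n R} (hM : IsBlockDiagonal b M)
    (hblocks : ∀ ℓ, (M.toSquareBlock b ℓ).PosDef) : M.PosDef := by
  refine .of_dotProduct_mulVec_pos (hM.isHermitian fun ℓ => (hblocks ℓ).isHermitian)
    fun x hx => ?_
  obtain ⟨i, hi⟩ := Function.ne_iff.mp hx
  rw [hM.dotProduct_mulVec]
  exact sum_pos' (fun ℓ _ => (hblocks ℓ).posSemidef.dotProduct_mulVec_nonneg _)
    ⟨b i, mem_univ _, (hblocks (b i)).dotProduct_mulVec_pos (Function.ne_iff.mpr ⟨⟨i, rfl⟩, hi⟩)⟩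

end IsBlockDiagonal

theorem PosDef.toSquareBlock [CommRing R] [PartialOrder R] [StarRing R]
    {A : Matrix n n R} (hA : A.PosDef) (b : n → ι) (ℓ : ι) : (A.toSquareBlock b ℓ).PosDef :=
  hA.submatrix Subtype.val_injective

theorem PosDef.blockDiagonalPart [Fintype n] [CommRing R] [PartialOrder R] [StarRing R]
    [IsOrderedCancelAddMonoid R] [Fintype ι] [DecidableEq ι] {A : Matrix n n R} (hA : A.PosDef)
    (b : n → ι) : (blockDiagonalPart b A).PosDef :=
  (isBlockDiagonal_blockDiagonalPart A).posDef fun ℓ => by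
    simpa only [toSquareBlock_blockDiagonalPart] using hA.toSquareBlock b ℓ

namespace PosDef

open scoped MatrixOrder

variable [Fintype n] [DecidableEq n] {A B : Matrix n n ℝ}

theorem log_det_le_trace_sub_card (hA : A.PosDef) :
    Real.log A.det ≤ A.trace - Fintype.card n := by
  have hpos := hA.eigenvalues_pos
  rw [hA.isHermitian.det_eq_prod_eigenvalues, hA.isHermitian.trace_eq_sum_eigenvalues]
  simp only [RCLike.ofReal_real_eq_id, id]
  rw [Real.log_prod fun i _ => (hpos i).ne']
  calc ∑ i, Real.log (hA.isHermitian.eigenvalues i)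
      ≤ ∑ i, (hA.isHermitian.eigenvalues i - 1) :=
        sum_le_sum fun i _ => Real.log_le_sub_one_of_pos (hpos i)
    _ = _ := by simp [sum_sub_distrib]

/-- Concavity of `log det`: its graph lies below its tangent plane at `B`, whose slope is
`X ↦ tr (B⁻¹ X)`. Conjugating by `√(B⁻¹)` reduces this to the case `B = 1`. -/
theorem log_det_le_log_det_add_trace_inv_mul (hA : A.PosDef) (hB : B.PosDef) :
    Real.log A.det ≤ Real.log B.det + (B⁻¹ * A).trace - Fintype.card n := by
  set R := CFC.sqrt B⁻¹
  have hR : R.PosDef := (IsStrictlyPositive.sqrt _ hB.inv.isStrictlyPositive).posDef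
  have hRR : R * R = B⁻¹ := CFC.sqrt_mul_sqrt_self _ hB.inv.posSemidef.nonneg
  have hC : (R * A * R).PosDef := by
    simpa only [hR.isHermitian.eq] using
      hA.conjTranspose_mul_mul_same (mulVec_injective_iff_isUnit.mpr hR.isUnit)
  have hdet : (R * A * R).det = B.det⁻¹ * A.det := by
    rw [det_mul, det_mul, mul_right_comm, ← det_mul, hRR, det_nonsing_inv, Ring.inverse_eq_inv']
  have htr : (R * A * R).trace = (B⁻¹ * A).trace := by
    rw [trace_mul_cycle, hRR]
  have := hC.log_det_le_trace_sub_card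
  rw [hdet, htr, Real.log_mul (inv_ne_zero hB.det_pos.ne') hA.det_pos.ne', Real.log_inv] at this
  linarith

/-- Fischer's inequality. Since `B⁻¹` is block diagonal too, `tr (B⁻¹ A) = tr (B⁻¹ B)`, so the
tangent-plane bound at `B` gives `log det A ≤ log det B`. -/
theorem det_le_det_blockDiagonalPart [Fintype ι] [LinearOrder ι] (hA : A.PosDef) (b : n → ι) :
    A.det ≤ (Matrix.blockDiagonalPart b A).det := by
  set B := Matrix.blockDiagonalPart b A
  have hB : B.PosDef := hA.blockDiagonalPart b
  have hBinv : IsBlockDiagonal b B⁻¹ := (isBlockDiagonal_blockDiagonalPart A).inv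
  have htr : (B⁻¹ * A).trace = Fintype.card n := by
    rw [← trace_one (n := n) (R := ℝ), ← nonsing_inv_mul B hB.det_pos.ne'.isUnit, trace_mul_comm,
      hBinv.trace_mul, trace_mul_comm, hBinv.trace_mul]
    simp only [B, toSquareBlock_blockDiagonalPart]
  have := hA.log_det_le_log_det_add_trace_inv_mul hB
  rw [htr] at this
  exact (Real.log_le_log_iff hA.det_pos hB.det_pos).mp (by linarith)

end PosDef

end Matrix

section glasso

variable {n ι : Type*} [Fintype n] [DecidableEq n] [Fintype ι] [LinearOrder ι] {b : n → ι}

theorem glassoObj_eq_sum_toSquareBlock (lam : ℝ) (A : Matrix n n ℝ) {M : Matrix n n ℝ}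
    (hM : IsBlockDiagonal b M) (hdet : ∀ ℓ, (M.toSquareBlock b ℓ).det ≠ 0) :
    glassoObj lam A M = ∑ ℓ, glassoObj lam (A.toSquareBlock b ℓ) (M.toSquareBlock b ℓ) := by
  have habs : ∑ i, ∑ j, |M i j| = ∑ ℓ, ∑ i, ∑ j, |M.toSquareBlock b ℓ i j| :=
    (hM.map (f := abs) abs_zero).sum_sum
  simp only [glassoObj, hM.det, Real.log_prod fun ℓ _ => hdet ℓ, hM.trace_mul A, habs, mul_sum,
    ← sum_neg_distrib, ← sum_add_distrib]

theorem glassoObj_blockDiagonalPart_le {lam : ℝ} {A Ψ : Matrix n n ℝ}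
    (hsep : ∀ i j, b i ≠ b j → |A i j| ≤ lam) (hΨ : Ψ.PosDef) :
    glassoObj lam A (blockDiagonalPart b Ψ) ≤ glassoObj lam A Ψ := by
  have hlog : Real.log Ψ.det ≤ Real.log (blockDiagonalPart b Ψ).det :=
    Real.log_le_log hΨ.det_pos (hΨ.det_le_det_blockDiagonalPart b)
  have hentry : ∀ i j, A i j * blockDiagonalPart b Ψ j i + lam * |blockDiagonalPart b Ψ i j|
      ≤ A i j * Ψ j i + lam * |Ψ i j| := by
    intro i j
    by_cases h : b i = b j
    · simp [blockDiagonalPart, h]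
    · have : |A i j * Ψ j i| ≤ lam * |Ψ i j| := by
        rw [abs_mul, ← hΨ.isHermitian.apply i j, star_trivial]
        exact mul_le_mul_of_nonneg_right (hsep i j h) (abs_nonneg _)
      simp only [blockDiagonalPart, of_apply, h, Ne.symm h, if_false, mul_zero, abs_zero, add_zero]
      linarith [neg_abs_le (A i j * Ψ j i)]
  have hlin := sum_le_sum fun i (_ : i ∈ univ) => sum_le_sum fun j (_ : j ∈ univ) => hentry i j
  simp only [sum_add_distrib, ← mul_sum] at hlin
  simp only [glassoObj, trace_mul_eq_sum_sum]
  linarith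

end glasso

theorem glasso_block_diagonal_solution_general
    (p : ℕ) (S : Matrix (Fin p) (Fin p) ℝ)
    (lam : ℝ)
    (K : ℕ) (b : Fin p → Fin K)
    (hsep : ∀ i j : Fin p, b i ≠ b j → |S i j| ≤ lam)
    (Θ : Matrix (Fin p) (Fin p) ℝ)
    (hoff : ∀ i j : Fin p, b i ≠ b j → Θ i j = 0)
    (hsub : ∀ ℓ : Fin K,
      IsGlassoSol lam
        (S.submatrix (Subtype.val : {i : Fin p // b i = ℓ} → Fin p) Subtype.val)
        (Θ.submatrix (Subtype.val : {i : Fin p // b i = ℓ} → Fin p) Subtype.val)) :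
    IsGlassoSol lam S Θ := by
  have hΘ : IsBlockDiagonal b Θ := hoff
  have hΘblocks (ℓ : Fin K) : (Θ.toSquareBlock b ℓ).PosDef := (hsub ℓ).1
  refine ⟨hΘ.posDef hΘblocks, fun Ψ hΨ => ?_⟩
  set B := blockDiagonalPart b Ψ
  have hB : IsBlockDiagonal b B := isBlockDiagonal_blockDiagonalPart Ψ
  calc glassoObj lam S Θ
      = ∑ ℓ, glassoObj lam (S.toSquareBlock b ℓ) (Θ.toSquareBlock b ℓ) :=
        glassoObj_eq_sum_toSquareBlock lam S hΘ fun ℓ => (hΘblocks ℓ).det_pos.ne'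
    _ ≤ ∑ ℓ, glassoObj lam (S.toSquareBlock b ℓ) (B.toSquareBlock b ℓ) :=
        sum_le_sum fun ℓ _ => by
          rw [toSquareBlock_blockDiagonalPart]
          exact (hsub ℓ).2 _ (hΨ.toSquareBlock b ℓ)
    _ = glassoObj lam S B :=
        (glassoObj_eq_sum_toSquareBlock lam S hB fun ℓ => by
          rw [toSquareBlock_blockDiagonalPart]
          exact (hΨ.toSquareBlock b ℓ).det_pos.ne').symm
    _ ≤ glassoObj lam S Ψ := glassoObj_blockDiagonalPart_le hsep hΨ

/-- if a partition of the vertices (given by the block-assignment map `b`) separates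
`S` at level `lam`, then the block-diagonal matrix assembled from graphical lasso solutions on the
blocks is a graphical lasso solution for `S`. -/
theorem glasso_block_diagonal_solution
    (p : ℕ) (hp : 1 ≤ p) (S : Matrix (Fin p) (Fin p) ℝ) (hS : S.PosSemidef)
    (lam : ℝ) (hlam : 0 < lam)
    (K : ℕ) (b : Fin p → Fin K) (hb : Function.Surjective b)
    (hsep : ∀ i j : Fin p, b i ≠ b j → |S i j| ≤ lam)
    (Θ : Matrix (Fin p) (Fin p) ℝ)
    (hoff : ∀ i j : Fin p, b i ≠ b j → Θ i j = 0)
    (hsub : ∀ ℓ : Fin K,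
      IsGlassoSol lam
        (S.submatrix (Subtype.val : {i : Fin p // b i = ℓ} → Fin p) Subtype.val)
        (Θ.submatrix (Subtype.val : {i : Fin p // b i = ℓ} → Fin p) Subtype.val)) :
    IsGlassoSol lam S Θ :=
  glasso_block_diagonal_solution_general p S lam K b hsep Θ hoff hsub
end

section
/- Let λ > 0 and let Θ̂ be a graphical lasso solution at λ for S. If vertices i and j lie in distinct connected components of the estimated concentration graph Ĝ^(λ), then |S_ij| ≤ λ. -/
open Matrix

/-!
Perturb `Θ̂` along the symmetric direction `E = e_i e_jᵀ + e_j e_iᵀ`. As `i` and `j` lie in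
different components, `Θ̂` is block diagonal with respect to the component of `i`, hence so is
`Θ̂⁻¹`: the entries `(i, j)`, `(j, i)` of both vanish. The matrix determinant lemma then gives
`det (Θ̂ + tE) = det Θ̂ · (1 - t² (Θ̂⁻¹)ᵢᵢ (Θ̂⁻¹)ⱼⱼ)`, so that along this line
`f (Θ̂ + tE) = f Θ̂ + 2t Sᵢⱼ + 2λ|t| + O(t²)`, and `Θ̂ + tE` stays positive definite for small `t`.
Minimality at `t = 0` forces `|2 Sᵢⱼ| ≤ 2λ`.
-/

open Filter Topology

theorem concGraph_apply_eq_zero_of_not_reachable {n : Type*} {Θ : Matrix n n ℝ} {i j : n}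
    (hij : ¬ (concGraph Θ).Reachable i j) : Θ i j = 0 := by
  by_contra hne
  refine hij (SimpleGraph.Adj.reachable ?_)
  rw [concGraph, SimpleGraph.fromRel_adj]
  exact ⟨fun h => hij (h ▸ .refl i), .inl hne⟩

section

variable {n R : Type*} [Fintype n] [DecidableEq n]

namespace Matrix

theorem inv_apply_eq_zero_of_not_reachable [CommRing R] {M : Matrix n n R} {G : SimpleGraph n}
    (hM : ∀ k l, ¬ G.Reachable k l → M k l = 0) {i j : n} (hij : ¬ G.Reachable i j) :
    M⁻¹ i j = 0 := by
  by_cases hdet : IsUnit M.det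
  · have := M.invertibleOfIsUnitDet hdet
    -- `Prop` is linearly ordered by `False < True`: a grading with two blocks
    have hblock : M.BlockTriangular (G.Reachable i) := fun k l hlk =>
      hM k l fun hkl => hlk.2 fun hik => hik.trans hkl
    exact blockTriangular_inv_of_blockTriangular hblock
      ⟨fun h => absurd h hij, fun h => hij (h (.refl i))⟩
  · simp [nonsing_inv_apply_not_isUnit M hdet]

theorem dotProduct_single_add_single_mulVec [CommRing R] (i j : n) (x : n → R) :
    x ⬝ᵥ (single i j 1 + single j i 1) *ᵥ x = 2 * (x i * x j) := by
  simp only [add_mulVec, dotProduct_add, single_mulVec_eq, dotProduct_smul, dotProduct_single]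
  simp only [one_mul, mul_one, smul_eq_mul]
  ring

theorem trace_mul_single_add_single [CommRing R] (S : Matrix n n R) (i j : n) :
    (S * (single i j 1 + single j i 1)).trace = S j i + S i j := by
  simp [Matrix.mul_add, trace_mul_single]

theorem det_add_smul_single_add_single [CommRing R] {Θ : Matrix n n R} (hΘ : IsUnit Θ.det)
    (i j : n) (t : R) :
    (Θ + t • (single i j 1 + single j i 1)).det
      = Θ.det * ((1 + t * Θ⁻¹ j i) * (1 + t * Θ⁻¹ i j) - t ^ 2 * (Θ⁻¹ i i * Θ⁻¹ j j)) := by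
  have hUV : t • (single i j 1 + single j i 1 : Matrix n n R) =
      (single i 0 t + single j 1 t : Matrix n (Fin 2) R) *
        (single 0 j 1 + single 1 i 1 : Matrix (Fin 2) n R) := by
    simp [Matrix.mul_add, Matrix.add_mul, single_mul_single_same, single_mul_single_of_ne]
  rw [hUV, det_add_mul _ _ hΘ, det_fin_two]
  simp [Matrix.mul_add, Matrix.add_mul, single_mul_mul_single]
  ring

theorem sum_abs_add_smul_single_add_single {Θ : Matrix n n ℝ} {i j : n} (hij : i ≠ j)
    (hΘij : Θ i j = 0) (hΘji : Θ j i = 0) (t : ℝ) :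
    ∑ k, ∑ l, |(Θ + t • (single i j 1 + single j i 1) : Matrix n n ℝ) k l|
      = ∑ k, ∑ l, |Θ k l| + 2 * |t| := by
  set E : Matrix n n ℝ := single i j 1 + single j i 1
  have hdisjoint : ∀ k l, Θ k l = 0 ∨ E k l = 0 := by
    intro k l
    by_cases h : (k = i ∧ l = j) ∨ (k = j ∧ l = i)
    · rcases h with ⟨rfl, rfl⟩ | ⟨rfl, rfl⟩ <;> simp [*]
    · right
      simp only [E, add_apply, single_apply]
      grind
  have hentry : ∀ k l, |(Θ + t • E) k l| = |Θ k l| + |t| * E k l := by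
    intro k l
    have hE : 0 ≤ E k l := by simp only [E, add_apply, single_apply]; positivity
    rcases hdisjoint k l with h | h <;> simp [h, abs_mul, abs_of_nonneg hE]
  have hsumE : ∑ k, ∑ l, E k l = 2 := by
    simp [E, single_apply, ite_and, Finset.sum_add_distrib, one_add_one_eq_two]
  simp_rw [hentry, Finset.sum_add_distrib, ← Finset.mul_sum, hsumE]
  ring

theorem PosDef.exists_pos_mul_dotProduct_le {Θ : Matrix n n ℝ} (hΘ : Θ.PosDef) :
    ∃ c > 0, ∀ x : n → ℝ, c * (x ⬝ᵥ x) ≤ x ⬝ᵥ Θ *ᵥ x := by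
  rcases isEmpty_or_nonempty n with hn | hn
  · exact ⟨1, one_pos, fun x => by simp [Subsingleton.elim x 0]⟩
  open scoped MatrixOrder in
  obtain ⟨c, hc, hle⟩ := (CFC.exists_pos_algebraMap_le_iff hΘ.isHermitian.isSelfAdjoint).2
    fun x hx => hΘ.isStrictlyPositive.spectrum_pos hx
  refine ⟨c, hc, fun x => ?_⟩
  simpa [sub_mulVec, Algebra.algebraMap_eq_smul_one, smul_mulVec] using
    (le_iff.1 hle).dotProduct_mulVec_nonneg x

theorem PosDef.eventually_posDef_add_smul_single_add_single {Θ : Matrix n n ℝ}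
    (hΘ : Θ.PosDef) (i j : n) :
    ∀ᶠ t : ℝ in 𝓝 0, (Θ + t • (single i j 1 + single j i 1)).PosDef := by
  obtain ⟨c, hc, hcΘ⟩ := hΘ.exists_pos_mul_dotProduct_le
  have hsmall : ∀ᶠ t : ℝ in 𝓝 0, |t| < c / 2 :=
    (continuous_abs.tendsto' 0 0 abs_zero).eventually (gt_mem_nhds (half_pos hc))
  filter_upwards [hsmall] with t ht
  have hherm : (single i j 1 + single j i 1 : Matrix n n ℝ).IsHermitian := by
    rw [IsHermitian, conjTranspose_add, conjTranspose_single, conjTranspose_single, star_one,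
      add_comm]
  refine .of_dotProduct_mulVec_pos (hΘ.isHermitian.add (hherm.smul (.all t))) fun x hx => ?_
  have hpos : 0 < x ⬝ᵥ x := by simpa using dotProduct_star_self_pos_iff.2 hx
  have hle : ∀ k, x k ^ 2 ≤ x ⬝ᵥ x := fun k =>
    (sq (x k)).trans_le (Finset.single_le_sum (fun l _ => mul_self_nonneg (x l)) (Finset.mem_univ k))
  have hcross : -(|t| * (x i ^ 2 + x j ^ 2)) ≤ t * (2 * (x i * x j)) := by
    cases abs_cases t <;> nlinarith [sq_nonneg (x i + x j), sq_nonneg (x i - x j)]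
  rw [star_trivial, add_mulVec, smul_mulVec, dotProduct_add, dotProduct_smul,
    dotProduct_single_add_single_mulVec, smul_eq_mul]
  nlinarith [hcΘ x, hle i, hle j, abs_nonneg t]

end Matrix

theorem glassoObj_add_smul_single_add_single (lam : ℝ) (S : Matrix n n ℝ) {Θ : Matrix n n ℝ}
    (hΘ : IsUnit Θ.det) {i j : n} (hij : i ≠ j) (hΘij : Θ i j = 0) (hΘji : Θ j i = 0) (t : ℝ) :
    glassoObj lam S (Θ + t • (single i j 1 + single j i 1)) =
      -Real.log (Θ.det * ((1 + t * Θ⁻¹ j i) * (1 + t * Θ⁻¹ i j) - t ^ 2 * (Θ⁻¹ i i * Θ⁻¹ j j)))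
        + ((S * Θ).trace + t * (S j i + S i j)) + lam * (∑ k, ∑ l, |Θ k l| + 2 * |t|) := by
  rw [glassoObj, det_add_smul_single_add_single hΘ, Matrix.mul_add, trace_add, Matrix.mul_smul,
    trace_smul, trace_mul_single_add_single, sum_abs_add_smul_single_add_single hij hΘij hΘji,
    smul_eq_mul]

theorem IsGlassoSol.eventually_neg_log_det_le {lam : ℝ} {S Θ : Matrix n n ℝ}
    (hΘ : IsGlassoSol lam S Θ) (hS : S.IsHermitian) {i j : n}
    (hij : ¬ (concGraph Θ).Reachable i j) :
    ∀ᶠ t in 𝓝 0, -Real.log Θ.det ≤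
      2 * S i j * t - Real.log (Θ.det * (1 - t ^ 2 * (Θ⁻¹ i i * Θ⁻¹ j j))) + 2 * lam * |t| := by
  obtain ⟨hΘpos, hΘmin⟩ := hΘ
  have hji : ¬ (concGraph Θ).Reachable j i := fun h => hij h.symm
  have hinv : ∀ {k l}, ¬ (concGraph Θ).Reachable k l → Θ⁻¹ k l = 0 :=
    inv_apply_eq_zero_of_not_reachable fun _ _ => concGraph_apply_eq_zero_of_not_reachable
  have hne : i ≠ j := fun h => hij (h ▸ .refl i)
  have hSji : S j i = S i j := by simpa using hS.apply i j
  filter_upwards [hΘpos.eventually_posDef_add_smul_single_add_single i j] with t ht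
  have hle := hΘmin _ ht
  rw [glassoObj_add_smul_single_add_single lam S (isUnit_iff_ne_zero.2 hΘpos.det_pos.ne')
    hne (concGraph_apply_eq_zero_of_not_reachable hij)
    (concGraph_apply_eq_zero_of_not_reachable hji), hinv hij, hinv hji, hSji, glassoObj] at hle
  simp only [mul_zero, add_zero, mul_one] at hle
  linarith

end

theorem abs_le_of_hasDerivAt_of_sub_le {h : ℝ → ℝ} {d a x : ℝ} (hd : HasDerivAt h d x)
    (hmin : ∀ᶠ t in 𝓝 x, h x - h t ≤ a * |t - x|) : |d| ≤ a := by
  have hslope := hasDerivAt_iff_tendsto_slope.1 hd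
  rw [abs_le]
  constructor
  · refine ge_of_tendsto (hslope.mono_left (nhdsGT_le_nhdsNE x)) ?_
    filter_upwards [self_mem_nhdsWithin, nhdsWithin_le_nhds hmin] with t (ht : x < t) hle
    rw [abs_of_pos (sub_pos.2 ht)] at hle
    rw [slope_def_field, le_div_iff₀ (sub_pos.2 ht)]
    linarith
  · refine le_of_tendsto (hslope.mono_left (nhdsLT_le_nhdsNE x)) ?_
    filter_upwards [self_mem_nhdsWithin, nhdsWithin_le_nhds hmin] with t (ht : t < x) hle
    rw [abs_of_neg (sub_neg.2 ht)] at hle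
    rw [slope_def_field, div_le_iff_of_neg (sub_neg.2 ht)]
    linarith

theorem glasso_distinct_components_small_cov_general
    (p : ℕ) (S : Matrix (Fin p) (Fin p) ℝ) (hS : S.PosSemidef)
    (lam : ℝ)
    (Θ : Matrix (Fin p) (Fin p) ℝ) (hΘ : IsGlassoSol lam S Θ)
    (i j : Fin p) (hij : ¬ (concGraph Θ).Reachable i j) :
    |S i j| ≤ lam := by
  set c := Θ⁻¹ i i * Θ⁻¹ j j
  set h : ℝ → ℝ := fun t => 2 * S i j * t - Real.log (Θ.det * (1 - t ^ 2 * c))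
  have hderiv : HasDerivAt h (2 * S i j) 0 := by
    have hq : HasDerivAt (fun t : ℝ => Θ.det * (1 - t ^ 2 * c)) 0 0 := by
      simpa using (((hasDerivAt_pow 2 (0 : ℝ)).mul_const c).const_sub 1).const_mul Θ.det
    exact (((hasDerivAt_id (0 : ℝ)).const_mul (2 * S i j)).sub
      (hq.log (by simpa using hΘ.1.det_pos.ne'))).congr_deriv (by simp)
  have h0 : h 0 = -Real.log Θ.det := by simp [h]
  have hlocal : ∀ᶠ t in 𝓝 0, h 0 - h t ≤ 2 * lam * |t - 0| :=
    (hΘ.eventually_neg_log_det_le hS.isHermitian hij).mono fun t ht => by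
      rw [h0, sub_zero]
      linarith
  have hbound := abs_le_of_hasDerivAt_of_sub_le hderiv hlocal
  rw [abs_mul, abs_two] at hbound
  linarith

/-- if `i` and `j` lie in distinct connected components of the estimated
concentration graph, then `|S i j| ≤ lam`. -/
theorem glasso_distinct_components_small_cov
    (p : ℕ) (hp : 1 ≤ p) (S : Matrix (Fin p) (Fin p) ℝ) (hS : S.PosSemidef)
    (lam : ℝ) (hlam : 0 < lam)
    (Θ : Matrix (Fin p) (Fin p) ℝ) (hΘ : IsGlassoSol lam S Θ)
    (i j : Fin p) (hij : ¬ (concGraph Θ).Reachable i j) :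
    |S i j| ≤ lam :=
  glasso_distinct_components_small_cov_general p S hS lam Θ hΘ i j hij
end

section
/- Let λ > 0, let Θ̂ be a graphical lasso solution at λ for S, and let Ŵ = Θ̂⁻¹. Then every diagonal entry of Ŵ satisfies Ŵ_ii = S_ii + λ for i = 1,…,p. -/
open Matrix

/-!
Perturb a minimizer `Θ` in its `(i, i)` entry only. Writing `w = Θ⁻¹ i i`, the matrix
`Θ + t • E_ii` stays positive definite while `1 + t w > 0` (by the Cauchy–Schwarz bound
`x i ^ 2 ≤ w * xᵀ Θ x`), its determinant is `det Θ * (1 + t w)`, and since `Θ i i > 0` its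
`ℓ¹` penalty grows by exactly `λ t` for small `t`. Hence `t ↦ t (S i i + λ) - log (1 + t w)`
has a local minimum at `0`, where its derivative is `S i i + λ - w`.
-/

section

variable {n : Type*} [Fintype n]

theorem Matrix.PosSemidef.dotProduct_mulVec_sq_le {M : Matrix n n ℝ} (hM : M.PosSemidef)
    (x y : n → ℝ) : (x ⬝ᵥ M *ᵥ y) ^ 2 ≤ (x ⬝ᵥ M *ᵥ x) * (y ⬝ᵥ M *ᵥ y) := by
  have hsymm : y ⬝ᵥ M *ᵥ x = x ⬝ᵥ M *ᵥ y := by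
    rw [dotProduct_mulVec, ← mulVec_transpose, dotProduct_comm,
      ← conjTranspose_eq_transpose_of_trivial, hM.isHermitian.eq]
  have hquad : ∀ s : ℝ,
      0 ≤ (y ⬝ᵥ M *ᵥ y) * (s * s) + 2 * (x ⬝ᵥ M *ᵥ y) * s + x ⬝ᵥ M *ᵥ x := fun s => by
    have := hM.dotProduct_mulVec_nonneg (x + s • y)
    simp only [star_trivial, mulVec_add, mulVec_smul, dotProduct_add, add_dotProduct,
      dotProduct_smul, smul_dotProduct, smul_eq_mul, hsymm] at this
    linarith
  have := discrim_le_zero hquad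
  rw [discrim] at this
  linarith

variable [DecidableEq n]

theorem Matrix.PosDef.sq_apply_le_inv_apply_mul {Θ : Matrix n n ℝ} (hΘ : Θ.PosDef) (i : n)
    (x : n → ℝ) : x i ^ 2 ≤ Θ⁻¹ i i * (x ⬝ᵥ Θ *ᵥ x) := by
  set y := Θ⁻¹ *ᵥ Pi.single i 1
  have hΘy : Θ *ᵥ y = Pi.single i 1 := by
    rw [mulVec_mulVec, mul_nonsing_inv _ (isUnit_iff_isUnit_det Θ |>.mp hΘ.isUnit), one_mulVec]
  have := hΘ.posSemidef.dotProduct_mulVec_sq_le x y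
  rw [hΘy, dotProduct_single_one, dotProduct_single_one, mul_comm] at this
  simpa [y] using this

theorem Matrix.PosDef.add_smul_single {Θ : Matrix n n ℝ} (hΘ : Θ.PosDef) (i : n) {t : ℝ}
    (ht : 0 < 1 + t * Θ⁻¹ i i) : (Θ + t • single i i 1).PosDef := by
  refine .of_dotProduct_mulVec_pos (hΘ.isHermitian.add ?_) fun x hx => ?_
  · ext j k
    simp [single_apply, and_comm]
  · have hquad : star x ⬝ᵥ (Θ + t • single i i 1) *ᵥ x = x ⬝ᵥ Θ *ᵥ x + t * x i ^ 2 := by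
      simp [add_mulVec, single_mulVec_eq, sq, mul_assoc]
    have hpos : 0 < x ⬝ᵥ Θ *ᵥ x := by simpa using hΘ.dotProduct_mulVec_pos hx
    have hle := hΘ.sq_apply_le_inv_apply_mul i x
    rw [hquad]
    rcases le_or_gt 0 t with ht0 | ht0
    · positivity
    · nlinarith

theorem Matrix.det_add_smul_single {K : Type*} [Field K] {A : Matrix n n K} (hA : A.det ≠ 0)
    (i : n) (t : K) : (A + t • single i i 1).det = A.det * (1 + t * A⁻¹ i i) := by
  have hrow : A + t • single i i 1 = A.updateRow i (A i + t • Pi.single i 1) := by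
    ext j k
    rcases eq_or_ne j i with rfl | hj
    · simp [single_apply, Pi.single_apply, eq_comm]
    · simp [hj, hj.symm]
  have hadj : A.adjugate i i = A.det * A⁻¹ i i := by
    rw [inv_def, Ring.inverse_eq_inv', smul_apply, smul_eq_mul, mul_inv_cancel_left₀ hA]
  rw [hrow, det_updateRow_add, updateRow_eq_self, det_updateRow_smul, ← adjugate_apply, hadj]
  ring

theorem Matrix.sum_abs_add_smul_single (A : Matrix n n ℝ) (i : n) (t : ℝ) :
    ∑ j, ∑ k, |(A + t • single i i 1 : Matrix n n ℝ) j k| =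
      ∑ j, ∑ k, |A j k| + (|A i i + t| - |A i i|) := by
  rw [← sub_eq_iff_eq_add', ← Finset.sum_sub_distrib]
  simp_rw [← Finset.sum_sub_distrib]
  rw [Fintype.sum_eq_single i fun j hj => Finset.sum_eq_zero fun k _ => by simp [hj.symm],
    Fintype.sum_eq_single i fun k hk => by simp [hk.symm]]
  simp

theorem glassoObj_add_smul_single (lam : ℝ) (A : Matrix n n ℝ) {Θ : Matrix n n ℝ}
    (hdet : 0 < Θ.det) {i : n} {t : ℝ} (ht : 0 < 1 + t * Θ⁻¹ i i) (hii : 0 ≤ Θ i i)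
    (hiit : 0 ≤ Θ i i + t) :
    glassoObj lam A (Θ + t • single i i 1) =
      glassoObj lam A Θ + (t * (A i i + lam) - Real.log (1 + t * Θ⁻¹ i i)) := by
  rw [glassoObj, glassoObj, det_add_smul_single hdet.ne', Real.log_mul hdet.ne' ht.ne',
    Matrix.mul_add, trace_add, Matrix.mul_smul, trace_smul, trace_mul_single,
    sum_abs_add_smul_single, abs_of_nonneg hii, abs_of_nonneg hiit]
  simp only [smul_eq_mul, MulOpposite.op_one, one_smul]
  ring

theorem eq_of_isLocalMin_mul_sub_log_one_add_mul {c w : ℝ}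
    (h : IsLocalMin (fun t => t * c - Real.log (1 + t * w)) 0) : w = c := by
  have hderiv : HasDerivAt (fun t => t * c - Real.log (1 + t * w)) (c - w) 0 := by
    have hlin : HasDerivAt (fun t : ℝ => 1 + t * w) w 0 := by
      simpa using ((hasDerivAt_id (0 : ℝ)).mul_const w).const_add 1
    simpa using ((hasDerivAt_id (0 : ℝ)).mul_const c).fun_sub (hlin.log (by simp))
  linarith [h.hasDerivAt_eq_zero hderiv]

end

theorem glasso_kkt_diagonal_general
    (p : ℕ) (S : Matrix (Fin p) (Fin p) ℝ)
    (lam : ℝ)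
    (Θ : Matrix (Fin p) (Fin p) ℝ) (hΘ : IsGlassoSol lam S Θ)
    (W : Matrix (Fin p) (Fin p) ℝ) (hW : W = Θ⁻¹) :
    ∀ i : Fin p, W i i = S i i + lam := by
  intro i
  subst hW
  obtain ⟨hpd, hmin⟩ := hΘ
  have hnear : ∀ᶠ t in nhds 0, 0 < 1 + t * Θ⁻¹ i i ∧ 0 < Θ i i + t := by
    refine (ContinuousAt.eventually_lt ?_ ?_ ?_).and (ContinuousAt.eventually_lt ?_ ?_ ?_) <;>
      first | fun_prop | simp [hpd.diag_pos]
  refine eq_of_isLocalMin_mul_sub_log_one_add_mul (hnear.mono fun t ⟨ht, hiit⟩ => ?_)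
  have hle := hmin _ (hpd.add_smul_single i ht)
  rw [glassoObj_add_smul_single lam S hpd.det_pos ht hpd.diag_pos.le hiit.le] at hle
  simpa using hle

/-- the diagonal entries of `W = Θ⁻¹` satisfy `W i i = S i i + lam`. -/
theorem glasso_kkt_diagonal
    (p : ℕ) (hp : 1 ≤ p) (S : Matrix (Fin p) (Fin p) ℝ) (hS : S.PosSemidef)
    (lam : ℝ) (hlam : 0 < lam)
    (Θ : Matrix (Fin p) (Fin p) ℝ) (hΘ : IsGlassoSol lam S Θ)
    (W : Matrix (Fin p) (Fin p) ℝ) (hW : W = Θ⁻¹) :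
    ∀ i : Fin p, W i i = S i i + lam :=
  glasso_kkt_diagonal_general p S lam Θ hΘ W hW
end

section
/- Let λ > 0 and let Θ̂ be a symmetric positive definite p×p real matrix. Suppose there exists a p×p real matrix Z with |Z_ij| ≤ 1 for all i, j, with Z_ij = 1 whenever Θ̂_ij > 0 and Z_ij = −1 whenever Θ̂_ij < 0, such that Θ̂⁻¹ = S + λ·Z. Then Θ̂ is a graphical lasso solution at λ for S, i.e., Θ̂ minimizes f(Θ) = −log det(Θ) + tr(S·Θ) + λ·∑_{i,j} |Θ_ij| over all symmetric positive definite p×p real matrices Θ. -/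
open Matrix

/-!
`Θ ↦ -log det Θ + tr(SΘ)` is convex with gradient `S - Θ⁻¹ = -λZ` at `Θ`, and `λZ` is a
subgradient of `λ‖·‖₁` at `Θ`; so the stationarity condition `Θ⁻¹ = S + λZ` says that `0` is a
subgradient of the objective at `Θ`. Concretely, the tangent-plane bound
`log det Ψ - log det Θ ≤ tr(Θ⁻¹Ψ) - p` (`log x ≤ x - 1` on the eigenvalues of
`R Ψ R` with `R = Θ^{-1/2}`) combines with `tr(ZΨ) ≤ ‖Ψ‖₁` and `tr(ZΘ) = ‖Θ‖₁`.
-/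

variable {n : Type*} [Fintype n]

theorem Matrix.PosDef.log_det_le_trace_sub_card_s8 [DecidableEq n] {A : Matrix n n ℝ}
    (hA : A.PosDef) : Real.log A.det ≤ A.trace - Fintype.card n := by
  have hpos := hA.eigenvalues_pos
  rw [hA.1.det_eq_prod_eigenvalues, hA.1.trace_eq_sum_eigenvalues]
  simp only [RCLike.ofReal_real_eq_id, id_eq]
  rw [Real.log_prod fun i _ => (hpos i).ne']
  calc ∑ i, Real.log (hA.1.eigenvalues i) ≤ ∑ i, (hA.1.eigenvalues i - 1) :=
        Finset.sum_le_sum fun i _ => Real.log_le_sub_one_of_pos (hpos i)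
    _ = (∑ i, hA.1.eigenvalues i) - Fintype.card n := by simp [Finset.sum_sub_distrib]

open scoped MatrixOrder in
theorem Matrix.PosDef.log_det_sub_log_det_le [DecidableEq n] {Θ Ψ : Matrix n n ℝ}
    (hΘ : Θ.PosDef) (hΨ : Ψ.PosDef) :
    Real.log Ψ.det - Real.log Θ.det ≤ (Θ⁻¹ * Ψ).trace - Fintype.card n := by
  set R := CFC.sqrt Θ⁻¹
  have hRR : R * R = Θ⁻¹ := CFC.sqrt_mul_sqrt_self _ hΘ.inv.posSemidef.nonneg
  have hRself : Rᴴ = R := (CFC.sqrt_nonneg _).posSemidef.1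
  have hdetR : R.det * R.det = Θ.det⁻¹ := by
    rw [← det_mul, hRR, det_nonsing_inv, Ring.inverse_eq_inv]
  have hRunit : IsUnit R := by
    rw [isUnit_iff_isUnit_det, isUnit_iff_ne_zero]
    intro h
    simp only [h, mul_zero] at hdetR
    exact inv_ne_zero hΘ.det_pos.ne' hdetR.symm
  have hRΨR : (R * Ψ * R).PosDef := by
    have := hΨ.conjTranspose_mul_mul_same (mulVec_injective_of_isUnit hRunit)
    rwa [hRself] at this
  have htrace : (R * Ψ * R).trace = (Θ⁻¹ * Ψ).trace := by rw [trace_mul_cycle, hRR]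
  have hdet : (R * Ψ * R).det = Θ.det⁻¹ * Ψ.det := by
    rw [det_mul, det_mul, ← hdetR]; ring
  have := hRΨR.log_det_le_trace_sub_card_s8
  rw [hdet, htrace, Real.log_mul (inv_ne_zero hΘ.det_pos.ne') hΨ.det_pos.ne', Real.log_inv] at this
  linarith

theorem Matrix.trace_mul_le_sum_abs {Z : Matrix n n ℝ} (hZ : ∀ i j, |Z i j| ≤ 1)
    (A : Matrix n n ℝ) : (Z * A).trace ≤ ∑ i, ∑ j, |A i j| := by
  calc (Z * A).trace = ∑ i, ∑ j, Z i j * A j i := by simp [trace, mul_apply]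
    _ ≤ ∑ i, ∑ j, |A j i| := by
        gcongr with i _ j _
        calc Z i j * A j i ≤ |Z i j| * |A j i| := by rw [← abs_mul]; exact le_abs_self _
          _ ≤ |A j i| := mul_le_of_le_one_left (abs_nonneg _) (hZ i j)
    _ = ∑ i, ∑ j, |A i j| := Finset.sum_comm

theorem Matrix.IsSymm.trace_mul_eq_sum_abs {A Z : Matrix n n ℝ} (hA : A.IsSymm)
    (hpos : ∀ i j, 0 < A i j → Z i j = 1) (hneg : ∀ i j, A i j < 0 → Z i j = -1) :
    (Z * A).trace = ∑ i, ∑ j, |A i j| := by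
  calc (Z * A).trace = ∑ i, ∑ j, Z i j * A i j := by
        simp only [trace, diag_apply, mul_apply]
        exact Finset.sum_congr rfl fun i _ => Finset.sum_congr rfl fun j _ => by rw [hA.apply i j]
    _ = ∑ i, ∑ j, |A i j| := by
        refine Finset.sum_congr rfl fun i _ => Finset.sum_congr rfl fun j _ => ?_
        rcases lt_trichotomy (A i j) 0 with h | h | h
        · rw [hneg i j h, abs_of_neg h]; ring
        · simp [h]
        · rw [hpos i j h, abs_of_pos h, one_mul]

theorem glasso_kkt_sufficient_general
    (p : ℕ) (S : Matrix (Fin p) (Fin p) ℝ)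
    (lam : ℝ) (hlam : 0 < lam)
    (Θ : Matrix (Fin p) (Fin p) ℝ) (hΘ : Θ.PosDef)
    (Z : Matrix (Fin p) (Fin p) ℝ)
    (hZbound : ∀ i j : Fin p, |Z i j| ≤ 1)
    (hZpos : ∀ i j : Fin p, 0 < Θ i j → Z i j = 1)
    (hZneg : ∀ i j : Fin p, Θ i j < 0 → Z i j = -1)
    (hstat : Θ⁻¹ = S + lam • Z) :
    IsGlassoSol lam S Θ := by
  refine ⟨hΘ, fun Ψ hΨ => ?_⟩
  have trace_inv_mul (A : Matrix (Fin p) (Fin p) ℝ) :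
      (Θ⁻¹ * A).trace = (S * A).trace + lam * (Z * A).trace := by
    rw [hstat, add_mul, smul_mul_assoc, trace_add, trace_smul, smul_eq_mul]
  have hlogdet := hΘ.log_det_sub_log_det_le hΨ
  have hΘΘ : (Θ⁻¹ * Θ).trace = p := by
    rw [nonsing_inv_mul Θ hΘ.det_pos.ne'.isUnit, trace_one, Fintype.card_fin]
  have hZΨ := mul_le_mul_of_nonneg_left (trace_mul_le_sum_abs hZbound Ψ) hlam.le
  have hZΘ := (isHermitian_iff_isSymm.mp hΘ.isHermitian).trace_mul_eq_sum_abs hZpos hZneg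
  rw [Fintype.card_fin, trace_inv_mul] at hlogdet
  rw [trace_inv_mul, hZΘ] at hΘΘ
  simp only [glassoObj]
  linarith

/-- sufficiency of the KKT conditions: if there is a subgradient matrix `Z` with
`|Z i j| ≤ 1`, `Z i j = 1` where `Θ i j > 0`, `Z i j = -1` where `Θ i j < 0`, and
`Θ⁻¹ = S + lam • Z`, then `Θ` is a graphical lasso solution at `lam` for `S`. -/
theorem glasso_kkt_sufficient
    (p : ℕ) (hp : 1 ≤ p) (S : Matrix (Fin p) (Fin p) ℝ) (hS : S.PosSemidef)
    (lam : ℝ) (hlam : 0 < lam)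
    (Θ : Matrix (Fin p) (Fin p) ℝ) (hΘ : Θ.PosDef)
    (Z : Matrix (Fin p) (Fin p) ℝ)
    (hZbound : ∀ i j : Fin p, |Z i j| ≤ 1)
    (hZpos : ∀ i j : Fin p, 0 < Θ i j → Z i j = 1)
    (hZneg : ∀ i j : Fin p, Θ i j < 0 → Z i j = -1)
    (hstat : Θ⁻¹ = S + lam • Z) :
    IsGlassoSol lam S Θ :=
  glasso_kkt_sufficient_general p S lam hlam Θ hΘ Z hZbound hZpos hZneg hstat
end

section
/- Let λ > 0 and let Θ̂ be a graphical lasso solution at λ for S. Then a vertex i is isolated in the estimated concentration graph Ĝ^(λ) (i.e., Θ̂_ij = 0 for all j ≠ i) if and only if |S_ij| ≤ λ for all j ≠ i. -/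
open Matrix

/-!
Write `e` for the `i`-th basis vector. If the `i`-th row of a positive definite `M` vanishes off
the diagonal and `w i = 0`, the bordered matrix `M + e wᵀ + w eᵀ` is congruent, by a transvection
of determinant one, to `M - q e eᵀ` with `q = wᵀ M⁻¹ w`. So its determinant is
`det M * (1 - q / M i i)`, and it is positive definite as soon as `q < M i i`; bordering changes
the trace term by `2 ∑ₖ S i k * w k` and the penalty by `2 λ ∑ₖ |w k|`.

If the `i`-th row of `Θ̂` vanishes, bordering `Θ̂` by `w = ∓ s e_j` lowers the linear terms by
`2 s (|S i j| - λ)` while the log-determinant rises only by `O(s²)`, so `|S i j| ≤ λ`.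
Conversely, `Θ̂` is itself the bordering of the matrix obtained by deleting the off-diagonal
entries of its `i`-th row and column; when `|S i j| ≤ λ` the linear terms of the bordering are
nonnegative, so optimality forces `-log (1 - q / Θ̂ i i) ≤ 0`, i.e. `q = 0`, i.e. the row vanishes.
-/

open Filter Topology

namespace Matrix

section CommRing

variable {n R : Type*} [Fintype n] [DecidableEq n] [CommRing R]

theorem transpose_one_add_vecMulVec_mul_mul {M : Matrix n n R} (hM : M.IsSymm) (u e : n → R) :
    (1 + vecMulVec u e)ᵀ * M * (1 + vecMulVec u e)
      = M + vecMulVec e (M *ᵥ u) + vecMulVec (M *ᵥ u) e + (u ⬝ᵥ M *ᵥ u) • vecMulVec e e := by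
  have hvec : u ᵥ* M = M *ᵥ u := by rw [← mulVec_transpose, hM.eq]
  simp only [transpose_add, transpose_one, transpose_vecMulVec, add_mul, mul_add, one_mul,
    mul_one, vecMulVec_mul, mul_vecMulVec, hvec, vecMulVec_mulVec, op_smul_eq_smul,
    smul_vecMulVec, dotProduct_comm u]
  abel

theorem det_add_vecMulVec {M : Matrix n n R} (hM : IsUnit M.det) (a b : n → R) :
    (M + vecMulVec a b).det = M.det * (1 + b ⬝ᵥ M⁻¹ *ᵥ a) := by
  rw [vecMulVec_eq Unit, det_add_replicateCol_mul_replicateRow hM, det_unique (n := Unit),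
    Matrix.add_apply, one_apply_eq, ← replicateRow_vecMul, replicateRow_mul_replicateCol_apply,
    dotProduct_mulVec]

theorem det_one_add_vecMulVec_single (u : n → R) (i : n) :
    (1 + vecMulVec u (Pi.single i 1)).det = 1 + u i := by
  simp [det_add_vecMulVec]

end CommRing

theorem PosDef.isSymm {n : Type*} {M : Matrix n n ℝ} (hM : M.PosDef) : M.IsSymm :=
  isHermitian_iff_isSymm.mp hM.isHermitian

theorem PosDef.transpose_mul_mul_same {n : Type*} [Fintype n] [DecidableEq n]
    {M U : Matrix n n ℝ} (hM : M.PosDef) (hU : U.det ≠ 0) : (Uᵀ * M * U).PosDef := by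
  simpa [conjTranspose_eq_transpose_of_trivial] using hM.conjTranspose_mul_mul_same
    (mulVec_injective_of_isUnit ((isUnit_iff_isUnit_det U).mpr hU.isUnit))

end Matrix

theorem nonpos_of_mul_le_neg_log_one_sub {a κ : ℝ}
    (h : ∀ s, 0 < s → κ * s ^ 2 < 1 → a * s ≤ -Real.log (1 - κ * s ^ 2)) : a ≤ 0 := by
  have hsmall : ∀ᶠ s in 𝓝 (0 : ℝ), κ * s ^ 2 < 1 :=
    (by fun_prop : Continuous fun s : ℝ => κ * s ^ 2).continuousAt.eventually_lt
      continuousAt_const (by simp)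
  have hbound : ∀ᶠ s in 𝓝[>] 0, a ≤ κ * s / (1 - κ * s ^ 2) := by
    filter_upwards [self_mem_nhdsWithin, nhdsWithin_le_nhds hsmall] with s (hs : 0 < s) hs1
    have hpos : 0 < 1 - κ * s ^ 2 := by linarith
    have hlog := Real.one_sub_inv_le_log_of_pos hpos
    have hle : a * s * (1 - κ * s ^ 2) ≤ κ * s * s := by
      rw [← le_div_iff₀ hpos]
      calc a * s ≤ -Real.log (1 - κ * s ^ 2) := h s hs hs1
        _ ≤ (1 - κ * s ^ 2)⁻¹ - 1 := by linarith
        _ = κ * s * s / (1 - κ * s ^ 2) := by field_simp; ring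
    rw [le_div_iff₀ hpos]
    nlinarith
  have hlim : Tendsto (fun s => κ * s / (1 - κ * s ^ 2)) (𝓝[>] 0) (𝓝 0) := by
    have : ContinuousAt (fun s => κ * s / (1 - κ * s ^ 2)) 0 := by fun_prop (disch := simp)
    simpa using this.tendsto.mono_left nhdsWithin_le_nhds
  exact ge_of_tendsto hlim hbound

section Border

variable {n : Type*} [Fintype n] [DecidableEq n]

def border (M : Matrix n n ℝ) (i : n) (w : n → ℝ) : Matrix n n ℝ :=
  M + vecMulVec (Pi.single i 1) w + vecMulVec w (Pi.single i 1)

variable {M : Matrix n n ℝ} {i : n}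

theorem mulVec_single_of_row_eq_zero (hM : M.IsSymm) (hrow : ∀ k ≠ i, M i k = 0) :
    M *ᵥ Pi.single i 1 = M i i • Pi.single i 1 := by
  ext k
  rcases eq_or_ne k i with rfl | hk
  · simp
  · simp [mulVec_single, hk, ← hM.apply k i, hrow k hk]

theorem inv_mulVec_apply_of_row_eq_zero (hM : M.PosDef) (hrow : ∀ k ≠ i, M i k = 0)
    (w : n → ℝ) : (M⁻¹ *ᵥ w) i = (M i i)⁻¹ * w i := by
  have hinv : M⁻¹ *ᵥ Pi.single i 1 = (M i i)⁻¹ • Pi.single i 1 := by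
    calc M⁻¹ *ᵥ Pi.single i 1 = (M i i)⁻¹ • (M⁻¹ *ᵥ (M i i • Pi.single i 1)) := by
          rw [mulVec_smul, smul_smul, inv_mul_cancel₀ hM.diag_pos.ne', one_smul]
      _ = (M i i)⁻¹ • Pi.single i 1 := by
          rw [← mulVec_single_of_row_eq_zero hM.isSymm hrow, mulVec_mulVec,
            nonsing_inv_mul _ (isUnit_iff_ne_zero.mpr hM.det_pos.ne'), one_mulVec]
  calc (M⁻¹ *ᵥ w) i = (M⁻¹ᵀ *ᵥ Pi.single i 1) ⬝ᵥ w := by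
        rw [mulVec_transpose, ← dotProduct_mulVec, single_dotProduct, one_mul]
    _ = (M i i)⁻¹ * w i := by
        rw [hM.inv.isSymm.eq, hinv, smul_dotProduct, single_dotProduct, one_mul, smul_eq_mul]

theorem border_eq_transpose_mul_mul (hM : M.PosDef) (hrow : ∀ k ≠ i, M i k = 0) {w : n → ℝ}
    (hw : w i = 0) :
    border M i w = (1 + vecMulVec (M⁻¹ *ᵥ w) (Pi.single i 1))ᵀ *
      (M - (w ⬝ᵥ M⁻¹ *ᵥ w) • vecMulVec (Pi.single i 1) (Pi.single i 1)) *
      (1 + vecMulVec (M⁻¹ *ᵥ w) (Pi.single i 1)) := by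
  set u := M⁻¹ *ᵥ w
  have hu : u i = 0 := by simp [u, inv_mulVec_apply_of_row_eq_zero hM hrow, hw]
  have hMu : M *ᵥ u = w := by
    rw [mulVec_mulVec, mul_nonsing_inv _ (isUnit_iff_ne_zero.mpr hM.det_pos.ne'), one_mulVec]
  have hDu : (M - (w ⬝ᵥ u) • vecMulVec (Pi.single i 1) (Pi.single i 1)) *ᵥ u = w := by
    simp [sub_mulVec, smul_mulVec, vecMulVec_mulVec, hMu, hu]
  rw [transpose_one_add_vecMulVec_mul_mul
    (hM.isSymm.sub (IsSymm.smul (transpose_vecMulVec _ _) _)), hDu, dotProduct_comm u w, border]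
  abel

theorem det_border (hM : M.PosDef) (hrow : ∀ k ≠ i, M i k = 0) {w : n → ℝ} (hw : w i = 0) :
    (border M i w).det = M.det * (1 - (w ⬝ᵥ M⁻¹ *ᵥ w) / M i i) := by
  rw [border_eq_transpose_mul_mul hM hrow hw, det_mul, det_mul, det_transpose,
    det_one_add_vecMulVec_single, inv_mulVec_apply_of_row_eq_zero hM hrow, hw, sub_eq_add_neg,
    ← neg_smul, ← smul_vecMulVec, det_add_vecMulVec (isUnit_iff_ne_zero.mpr hM.det_pos.ne')]
  rw [mulVec_smul, dotProduct_smul, single_dotProduct, one_mul,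
    inv_mulVec_apply_of_row_eq_zero hM hrow, Pi.single_eq_same, smul_eq_mul]
  ring

theorem posDef_sub_smul_vecMulVec_single (hM : M.PosDef) (hrow : ∀ k ≠ i, M i k = 0) {q : ℝ}
    (hq : q < M i i) : (M - q • vecMulVec (Pi.single i 1) (Pi.single i 1)).PosDef := by
  have hc : 0 < M i i := hM.diag_pos
  have hr : 0 < 1 - q / M i i := by rw [sub_pos, div_lt_one hc]; exact hq
  set a := √(1 - q / M i i)
  have ha : 0 < a := Real.sqrt_pos.mpr hr
  have ha2 : a ^ 2 = 1 - q / M i i := Real.sq_sqrt hr.le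
  have hconj : (1 + vecMulVec ((a - 1) • Pi.single i 1) (Pi.single i 1))ᵀ * M *
      (1 + vecMulVec ((a - 1) • Pi.single i 1) (Pi.single i 1))
      = M - q • vecMulVec (Pi.single i 1) (Pi.single i 1) := by
    rw [transpose_one_add_vecMulVec_mul_mul hM.isSymm, mulVec_smul,
      mulVec_single_of_row_eq_zero hM.isSymm hrow]
    have hq' : q = -(2 * ((a - 1) * M i i) + (a - 1) * ((a - 1) * M i i)) := by
      field_simp at ha2; linear_combination ha2
    simp only [vecMulVec_smul, smul_vecMulVec, smul_dotProduct, dotProduct_smul,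
      single_dotProduct, Pi.single_eq_same, smul_eq_mul, mul_one, hq']
    module
  rw [← hconj]
  exact hM.transpose_mul_mul_same (by rw [det_one_add_vecMulVec_single]; simpa using ha.ne')

theorem posDef_border (hM : M.PosDef) (hrow : ∀ k ≠ i, M i k = 0) {w : n → ℝ} (hw : w i = 0)
    (hq : w ⬝ᵥ M⁻¹ *ᵥ w < M i i) : (border M i w).PosDef := by
  rw [border_eq_transpose_mul_mul hM hrow hw]
  exact (posDef_sub_smul_vecMulVec_single hM hrow hq).transpose_mul_mul_same
    (by simp [det_one_add_vecMulVec_single, inv_mulVec_apply_of_row_eq_zero hM hrow, hw])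

theorem trace_mul_border {S : Matrix n n ℝ} (hS : S.IsSymm) (M : Matrix n n ℝ) (i : n)
    (w : n → ℝ) : (S * border M i w).trace = (S * M).trace + 2 * ∑ k, S i k * w k := by
  rw [border, mul_add, mul_add, trace_add, trace_add, mul_vecMulVec, mul_vecMulVec,
    trace_vecMulVec, trace_vecMulVec, mulVec_single_one, dotProduct_single, mul_one]
  simp only [mulVec, dotProduct, col_apply, hS.apply i]
  ring

theorem sum_abs_border (hM : M.IsSymm) (hrow : ∀ k ≠ i, M i k = 0) {w : n → ℝ} (hw : w i = 0) :
    ∑ a, ∑ b, |border M i w a b| = ∑ a, ∑ b, |M a b| + 2 * ∑ k, |w k| := by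
  have hentry : ∀ a b, |border M i w a b|
      = |M a b| + (if a = i then |w b| else 0) + (if b = i then |w a| else 0) := by
    intro a b
    simp only [border, Matrix.add_apply, vecMulVec_apply, Pi.single_apply]
    by_cases ha : a = i <;> by_cases hb : b = i
    · simp [ha, hb, hw]
    · simp [ha, hb, hrow b hb]
    · simp [ha, hb, ← hM.apply a i, hrow a ha]
    · simp [ha, hb]
  simp only [hentry, Finset.sum_add_distrib, Finset.sum_ite_irrel, Finset.sum_const_zero,
    Finset.sum_ite_eq', Finset.mem_univ, if_true]
  ring

theorem glassoObj_border {S : Matrix n n ℝ} (hS : S.IsSymm) (hM : M.PosDef)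
    (hrow : ∀ k ≠ i, M i k = 0) {w : n → ℝ} (hw : w i = 0) (hq : w ⬝ᵥ M⁻¹ *ᵥ w < M i i)
    (lam : ℝ) : glassoObj lam S (border M i w) = glassoObj lam S M
      - Real.log (1 - (w ⬝ᵥ M⁻¹ *ᵥ w) / M i i) + 2 * ∑ k, (S i k * w k + lam * |w k|) := by
  have hr : 0 < 1 - (w ⬝ᵥ M⁻¹ *ᵥ w) / M i i := by rw [sub_pos, div_lt_one hM.diag_pos]; exact hq
  rw [glassoObj, glassoObj, det_border hM hrow hw, Real.log_mul hM.det_pos.ne' hr.ne',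
    trace_mul_border hS, sum_abs_border hM.isSymm hrow hw, Finset.sum_add_distrib,
    ← Finset.mul_sum]
  ring

end Border

section Isolate

variable {n : Type*} [DecidableEq n]

/-- `M` with the off-diagonal entries of its `i`-th row and column set to zero. -/
def isolate (M : Matrix n n ℝ) (i : n) : Matrix n n ℝ :=
  M - vecMulVec (Pi.single i 1) (Function.update (M i) i 0)
    - vecMulVec (Function.update (M i) i 0) (Pi.single i 1)

theorem border_isolate (M : Matrix n n ℝ) (i : n) :
    border (isolate M i) i (Function.update (M i) i 0) = M := by
  simp only [border, isolate]
  abel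

theorem isolate_apply_of_ne (M : Matrix n n ℝ) {i k : n} (hk : k ≠ i) : isolate M i i k = 0 := by
  simp [isolate, vecMulVec_apply, hk]

theorem isolate_apply_self (M : Matrix n n ℝ) (i : n) : isolate M i i i = M i i := by
  simp [isolate, vecMulVec_apply]

theorem posDef_isolate [Fintype n] {M : Matrix n n ℝ} (hM : M.PosDef) (i : n) :
    (isolate M i).PosDef := by
  set θ := Function.update (M i) i 0
  have hcol : M *ᵥ Pi.single i 1 = θ + M i i • Pi.single i 1 := by
    ext k
    rcases eq_or_ne k i with rfl | hk
    · simp [θ]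
    · simp [θ, mulVec_single, hk, ← hM.isSymm.apply k i]
  have hreflect : (1 + vecMulVec ((-2 : ℝ) • Pi.single i 1) (Pi.single i 1))ᵀ * M *
      (1 + vecMulVec ((-2 : ℝ) • Pi.single i 1) (Pi.single i 1))
      = M - (2 : ℝ) • vecMulVec (Pi.single i 1) θ - (2 : ℝ) • vecMulVec θ (Pi.single i 1) := by
    rw [transpose_one_add_vecMulVec_mul_mul hM.isSymm, mulVec_smul, hcol]
    simp only [vecMulVec_smul, smul_vecMulVec, vecMulVec_add, add_vecMulVec, smul_dotProduct,
      dotProduct_smul, dotProduct_add, single_dotProduct, θ, Function.update_self,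
      Pi.single_eq_same, smul_eq_mul]
    module
  -- `isolate M i` is the average of `M` and its conjugate by the reflection `e ↦ -e`.
  have hhalf : isolate M i = (2 : ℝ)⁻¹ • (M + (1 + vecMulVec ((-2 : ℝ) • Pi.single i 1)
      (Pi.single i 1))ᵀ * M * (1 + vecMulVec ((-2 : ℝ) • Pi.single i 1) (Pi.single i 1))) := by
    rw [hreflect, isolate]
    module
  rw [hhalf]
  refine (hM.add (hM.transpose_mul_mul_same ?_)).smul (by norm_num)
  rw [det_one_add_vecMulVec_single]
  norm_num

end Isolate

section Glasso

variable {n : Type*} [Fintype n] [DecidableEq n] {lam : ℝ} {S Θ : Matrix n n ℝ} {i : n}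

theorem IsGlassoSol.abs_le_of_row_eq_zero (hS : S.IsSymm) (hΘ : IsGlassoSol lam S Θ)
    (hrow : ∀ k ≠ i, Θ i k = 0) {j : n} (hj : j ≠ i) : |S i j| ≤ lam := by
  obtain ⟨σ, hσ, hσS⟩ : ∃ σ : ℝ, |σ| = 1 ∧ σ * S i j = |S i j| := by
    rcases abs_choice (S i j) with h | h
    · exact ⟨1, by norm_num, by rw [h, one_mul]⟩
    · exact ⟨-1, by norm_num, by rw [h]; ring⟩
  suffices 2 * (|S i j| - lam) ≤ 0 by linarith
  refine nonpos_of_mul_le_neg_log_one_sub (κ := Θ⁻¹ j j / Θ i i) fun s hs hsmall => ?_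
  set w : n → ℝ := Pi.single j (-(s * σ))
  have hw : w i = 0 := Pi.single_eq_of_ne hj.symm _
  have hκ : (w ⬝ᵥ Θ⁻¹ *ᵥ w) / Θ i i = Θ⁻¹ j j / Θ i i * s ^ 2 := by
    have hσ2 : σ ^ 2 = 1 := by rw [← sq_abs, hσ, one_pow]
    simp only [w, mulVec_single, single_dotProduct, op_smul_eq_smul, Pi.smul_apply, col_apply,
      smul_eq_mul]
    linear_combination Θ⁻¹ j j / Θ i i * s ^ 2 * hσ2
  have hqc : w ⬝ᵥ Θ⁻¹ *ᵥ w < Θ i i := (div_lt_one hΘ.1.diag_pos).mp (hκ ▸ hsmall)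
  have hsum : ∑ k, (S i k * w k + lam * |w k|) = -(s * |S i j|) + lam * s := by
    rw [Finset.sum_eq_single j (fun k _ hk => by simp [w, hk]) (by simp)]
    simp only [w, Pi.single_eq_same, abs_neg, abs_mul, abs_of_pos hs, hσ, ← hσS]
    ring
  have hmin := hΘ.2 _ (posDef_border hΘ.1 hrow hw hqc)
  rw [glassoObj_border hS hΘ.1 hrow hw hqc, hκ, hsum] at hmin
  linarith

theorem IsGlassoSol.row_eq_zero_of_abs_le (hS : S.IsSymm) (hΘ : IsGlassoSol lam S Θ)
    (habs : ∀ k ≠ i, |S i k| ≤ lam) : ∀ k ≠ i, Θ i k = 0 := by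
  set θ := Function.update (Θ i) i 0
  have hθ : θ i = 0 := Function.update_self _ _ _
  have hΘ₀ := posDef_isolate hΘ.1 i
  have hrow₀ : ∀ k ≠ i, isolate Θ i i k = 0 := fun k hk => isolate_apply_of_ne Θ hk
  set q := θ ⬝ᵥ (isolate Θ i)⁻¹ *ᵥ θ
  have hr : 0 < 1 - q / Θ i i := by
    have hdet := det_border hΘ₀ hrow₀ hθ
    rw [border_isolate, isolate_apply_self] at hdet
    exact (pos_iff_pos_of_mul_pos (hdet ▸ hΘ.1.det_pos)).mp hΘ₀.det_pos
  have hq_lt : q < isolate Θ i i i := by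
    rwa [isolate_apply_self, ← div_lt_one hΘ.1.diag_pos, ← sub_pos]
  have hobj := glassoObj_border hS hΘ₀ hrow₀ hθ hq_lt lam
  rw [border_isolate, isolate_apply_self] at hobj
  have hsum : 0 ≤ ∑ k, (S i k * θ k + lam * |θ k|) := Finset.sum_nonneg fun k _ => by
    rcases eq_or_ne k i with rfl | hk
    · simp [hθ]
    · have hneg := neg_abs_le (S i k * θ k)
      rw [abs_mul] at hneg
      linarith [mul_le_mul_of_nonneg_right (habs k hk) (abs_nonneg (θ k))]
  have hq_nonpos : q ≤ 0 := by
    have hlog : 1 ≤ 1 - q / Θ i i := (Real.log_nonneg_iff hr).mp (by linarith [hΘ.2 _ hΘ₀])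
    simpa using (div_le_iff₀ hΘ.1.diag_pos).mp (by linarith : q / Θ i i ≤ 0)
  have hθ0 : θ = 0 := by
    by_contra hne
    have hq_pos := hΘ₀.inv.dotProduct_mulVec_pos hne
    rw [star_trivial] at hq_pos
    linarith
  intro k hk
  simpa [θ, hk] using congrFun hθ0 k

end Glasso

theorem glasso_isolated_node_iff_general
    (p : ℕ) (S : Matrix (Fin p) (Fin p) ℝ) (hS : S.PosSemidef)
    (lam : ℝ)
    (Θ : Matrix (Fin p) (Fin p) ℝ) (hΘ : IsGlassoSol lam S Θ)
    (i : Fin p) :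
    (∀ j : Fin p, j ≠ i → Θ i j = 0) ↔ (∀ j : Fin p, j ≠ i → |S i j| ≤ lam) := by
  have hS' : S.IsSymm := isHermitian_iff_isSymm.mp hS.isHermitian
  exact ⟨fun hrow _ hj => hΘ.abs_le_of_row_eq_zero hS' hrow hj, hΘ.row_eq_zero_of_abs_le hS'⟩

/-- a vertex `i` is isolated in the estimated concentration graph iff
`|S i j| ≤ lam` for all `j ≠ i`. -/
theorem glasso_isolated_node_iff
    (p : ℕ) (hp : 1 ≤ p) (S : Matrix (Fin p) (Fin p) ℝ) (hS : S.PosSemidef)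
    (lam : ℝ) (hlam : 0 < lam)
    (Θ : Matrix (Fin p) (Fin p) ℝ) (hΘ : IsGlassoSol lam S Θ)
    (i : Fin p) :
    (∀ j : Fin p, j ≠ i → Θ i j = 0) ↔ (∀ j : Fin p, j ≠ i → |S i j| ≤ lam) :=
  glasso_isolated_node_iff_general p S hS lam Θ hΘ i
end

section
/- Let m ≥ 1 be an integer, let W be a symmetric positive definite m×m real matrix, let s ∈ ℝ^m, let c > 0 and λ > 0 be reals, and define g(θ) = (1/2)·θᵀWθ + c·θᵀs + λ·c·∑_{j=1}^m |θ_j| for θ ∈ ℝ^m. Then the zero vector 0 ∈ ℝ^m minimizes g over ℝ^m if and only if max_{1 ≤ j ≤ m} |s_j| ≤ λ. -/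
open Matrix

/- Along a ray, `g (t • v) = t² Q(v) + t L(v)` with `L(v) = c (v ⬝ᵥ s + λ ∑ⱼ |vⱼ|)`, so `0`
minimizes `g` only if `L ≥ 0`; testing `v = ±eⱼ` gives `|sⱼ| ≤ λ`. Conversely `|sⱼ| ≤ λ` makes
`L ≥ 0` everywhere, and the quadratic part `Q` is nonnegative. -/
theorem nonneg_of_forall_pos_sq_mul_add_mul_nonneg {a b : ℝ}
    (h : ∀ t : ℝ, 0 < t → 0 ≤ t ^ 2 * a + t * b) : 0 ≤ b := by
  by_contra! hb
  have ht : 0 < -b / (|a| + 1) := div_pos (neg_pos.mpr hb) (by positivity)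
  have key := h _ ht
  have hta : -b / (|a| + 1) * (|a| + 1) = -b := div_mul_cancel₀ _ (by positivity)
  nlinarith [le_abs_self a, abs_nonneg a]

section LassoRow

variable {n : Type*} [Fintype n]

noncomputable def lassoRowObj (W : Matrix n n ℝ) (s : n → ℝ) (c lam : ℝ) (θ : n → ℝ) : ℝ :=
  (1 / 2) * (θ ⬝ᵥ W *ᵥ θ) + c * (θ ⬝ᵥ s) + lam * c * ∑ j, |θ j|

variable {W : Matrix n n ℝ} {s : n → ℝ} {c lam : ℝ}

@[simp]
theorem lassoRowObj_zero : lassoRowObj W s c lam 0 = 0 := by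
  simp [lassoRowObj]

theorem lassoRowObj_smul {t : ℝ} (ht : 0 ≤ t) (v : n → ℝ) :
    lassoRowObj W s c lam (t • v)
      = t ^ 2 * ((1 / 2) * (v ⬝ᵥ W *ᵥ v)) + t * (c * (v ⬝ᵥ s + lam * ∑ j, |v j|)) := by
  simp only [lassoRowObj, mulVec_smul, smul_dotProduct, dotProduct_smul, Pi.smul_apply,
    smul_eq_mul, abs_mul, abs_of_nonneg ht, ← Finset.mul_sum]
  ring

theorem dotProduct_add_mul_sum_abs_nonneg (hs : ∀ j, |s j| ≤ lam) (θ : n → ℝ) :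
    0 ≤ θ ⬝ᵥ s + lam * ∑ j, |θ j| := by
  rw [dotProduct, Finset.mul_sum, ← Finset.sum_add_distrib]
  refine Finset.sum_nonneg fun j _ => ?_
  nlinarith [neg_abs_le (θ j * s j), abs_mul (θ j) (s j), hs j, abs_nonneg (θ j)]

theorem lassoRowObj_nonneg (hW : W.PosSemidef) (hc : 0 ≤ c) (hs : ∀ j, |s j| ≤ lam)
    (θ : n → ℝ) : 0 ≤ lassoRowObj W s c lam θ := by
  have hquad : 0 ≤ θ ⬝ᵥ W *ᵥ θ := by simpa using hW.dotProduct_mulVec_nonneg θ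
  have hlin := mul_nonneg hc (dotProduct_add_mul_sum_abs_nonneg hs θ)
  rw [lassoRowObj]
  nlinarith

theorem directional_nonneg_of_lassoRowObj_nonneg (h : ∀ θ, 0 ≤ lassoRowObj W s c lam θ)
    (v : n → ℝ) : 0 ≤ c * (v ⬝ᵥ s + lam * ∑ j, |v j|) :=
  nonneg_of_forall_pos_sq_mul_add_mul_nonneg fun t ht => lassoRowObj_smul ht.le v ▸ h (t • v)

theorem abs_le_of_lassoRowObj_nonneg [DecidableEq n] (hc : 0 < c)
    (h : ∀ θ, 0 ≤ lassoRowObj W s c lam θ) (j : n) : |s j| ≤ lam := by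
  have hdir (ε : ℝ) (hε : |ε| = 1) : 0 ≤ ε * s j + lam := by
    have := directional_nonneg_of_lassoRowObj_nonneg h (Pi.single j ε)
    have hsum : ∑ k, |Pi.single j ε k| = 1 := by
      rw [Fintype.sum_eq_single j fun k hk => by simp [hk]]
      simpa using hε
    rw [single_dotProduct, hsum, mul_one] at this
    exact nonneg_of_mul_nonneg_right this hc
  have hplus := hdir 1 abs_one
  have hminus := hdir (-1) (by simp)
  exact abs_le.mpr ⟨by linarith, by linarith⟩

end LassoRow

theorem lasso_row_subproblem_zero_iff_general
    (m : ℕ) (W : Matrix (Fin m) (Fin m) ℝ) (hW : W.PosDef)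
    (s : Fin m → ℝ) (c lam : ℝ) (hc : 0 < c) :
    (∀ θ : Fin m → ℝ,
        (1 / 2) * ((0 : Fin m → ℝ) ⬝ᵥ W.mulVec 0) + c * ((0 : Fin m → ℝ) ⬝ᵥ s)
            + lam * c * ∑ j, |(0 : Fin m → ℝ) j|
          ≤ (1 / 2) * (θ ⬝ᵥ W.mulVec θ) + c * (θ ⬝ᵥ s) + lam * c * ∑ j, |θ j|)
      ↔ ∀ j : Fin m, |s j| ≤ lam := by
  change (∀ θ, lassoRowObj W s c lam 0 ≤ lassoRowObj W s c lam θ) ↔ _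
  simp only [lassoRowObj_zero]
  exact ⟨abs_le_of_lassoRowObj_nonneg hc, fun hs => lassoRowObj_nonneg hW.posSemidef hc.le hs⟩

/-- the zero vector minimizes the lasso-type row subproblem
`g(θ) = ½ θᵀWθ + c θᵀs + lam·c·∑_j |θ_j|` iff `max_j |s_j| ≤ lam`. -/
theorem lasso_row_subproblem_zero_iff
    (m : ℕ) (hm : 1 ≤ m) (W : Matrix (Fin m) (Fin m) ℝ) (hW : W.PosDef)
    (s : Fin m → ℝ) (c lam : ℝ) (hc : 0 < c) (hlam : 0 < lam) :
    (∀ θ : Fin m → ℝ,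
        (1 / 2) * ((0 : Fin m → ℝ) ⬝ᵥ W.mulVec 0) + c * ((0 : Fin m → ℝ) ⬝ᵥ s)
            + lam * c * ∑ j, |(0 : Fin m → ℝ) j|
          ≤ (1 / 2) * (θ ⬝ᵥ W.mulVec θ) + c * (θ ⬝ᵥ s) + lam * c * ∑ j, |θ j|)
      ↔ ∀ j : Fin m, |s j| ≤ lam :=
  lasso_row_subproblem_zero_iff_general m W hW s c lam hc
end

section
/- Let λ > 0 and suppose |S_ij| ≤ λ for all i ≠ j. Then the diagonal p×p matrix D with diagonal entries D_ii = 1/(S_ii + λ) (well defined since S_ii ≥ 0 and λ > 0) and D_ij = 0 for i ≠ j is a graphical lasso solution at λ for S. -/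
/-!
Write `a i = S i i + λ`. For positive definite `Ψ`, the penalty dominates the off-diagonal part of
`tr(SΨ)` entrywise (`|S i j| ≤ λ`), so `f(Ψ) ≥ ∑ a i Ψ i i - log det Ψ`. Conjugating `Ψ` by
`diag(√a)` and applying `μ - log μ ≥ 1` to its eigenvalues bounds this below by
`p + ∑ log a i`, which is exactly the objective at `diag(1 / a)`.
-/

open Matrix Finset

section

variable {n : Type*} [Fintype n] [DecidableEq n]

theorem Matrix.PosDef.card_le_trace_sub_log_det {M : Matrix n n ℝ} (hM : M.PosDef) :
    (Fintype.card n : ℝ) ≤ M.trace - Real.log M.det := by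
  have hμ := hM.eigenvalues_pos
  rw [hM.1.trace_eq_sum_eigenvalues, hM.1.det_eq_prod_eigenvalues]
  simp only [RCLike.ofReal_real_eq_id, id_eq]
  rw [Real.log_prod fun i _ => (hμ i).ne', ← sum_sub_distrib, Fintype.card, cast_card]
  exact sum_le_sum fun i _ => by linarith [Real.log_le_sub_one_of_pos (hμ i)]

theorem Matrix.PosDef.card_add_sum_log_le_sum_mul_diag_sub_log_det {Ψ : Matrix n n ℝ}
    (hΨ : Ψ.PosDef) {a : n → ℝ} (ha : ∀ i, 0 < a i) :
    (Fintype.card n : ℝ) + ∑ i, Real.log (a i) ≤ ∑ i, a i * Ψ i i - Real.log Ψ.det := by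
  set B := diagonal fun i => √(a i)
  have hB : IsUnit B := isUnit_diagonal.2 <| Pi.isUnit_iff.2 fun i =>
    (Real.sqrt_pos.2 (ha i)).ne'.isUnit
  have hM : (star B * Ψ * B).PosDef := (IsUnit.posDef_star_left_conjugate_iff hB).2 hΨ
  have hstar : star B = B := by simp [B, star_eq_conjTranspose]
  have htrace : (star B * Ψ * B).trace = ∑ i, a i * Ψ i i := by
    refine sum_congr rfl fun i _ => ?_
    rw [hstar, diag_apply, mul_diagonal, diagonal_mul, mul_comm, ← mul_assoc,
      Real.mul_self_sqrt (ha i).le]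
  have hdet : (star B * Ψ * B).det = (∏ i, a i) * Ψ.det := by
    rw [hstar, det_mul, det_mul, det_diagonal, mul_right_comm, ← prod_mul_distrib]
    simp only [Real.mul_self_sqrt (ha _).le]
  have := hM.card_le_trace_sub_log_det
  rw [htrace, hdet, Real.log_mul (prod_pos fun i _ => ha i).ne' hΨ.det_pos.ne',
    Real.log_prod fun i _ => (ha i).ne'] at this
  linarith

theorem sum_add_mul_diag_le_trace_mul_add_sum_abs {S Ψ : Matrix n n ℝ} {lam : ℝ}
    (hS : ∀ i j, i ≠ j → |S i j| ≤ lam) (hΨ : ∀ i, 0 ≤ Ψ i i) :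
    ∑ i, (S i i + lam) * Ψ i i ≤ (S * Ψ).trace + lam * ∑ i, ∑ j, |Ψ i j| := by
  have h_off_diag : ∀ i j, j ≠ i → 0 ≤ S i j * Ψ j i + lam * |Ψ j i| := fun i j hji => by
    have := mul_le_mul_of_nonneg_right (hS i j hji.symm) (abs_nonneg (Ψ j i))
    linarith [neg_abs_le (S i j * Ψ j i), abs_mul (S i j) (Ψ j i)]
  -- pairing `S i j` with `Ψ j i` makes the bound hold without symmetry of `Ψ`
  have htrace : (S * Ψ).trace = ∑ i, ∑ j, S i j * Ψ j i := rfl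
  rw [htrace, sum_comm (f := fun i j => |Ψ i j|), mul_sum, ← sum_add_distrib]
  refine sum_le_sum fun i _ => ?_
  rw [mul_sum, ← sum_add_distrib, ← add_sum_erase _ _ (mem_univ i),
    abs_of_nonneg (hΨ i), add_mul]
  exact le_add_of_nonneg_right <| sum_nonneg fun j hj => h_off_diag i j (ne_of_mem_erase hj)

theorem glassoObj_diagonal (lam : ℝ) (A : Matrix n n ℝ) {d : n → ℝ} (hd : ∀ i, 0 ≤ d i) :
    glassoObj lam A (diagonal d) = -Real.log (∏ i, d i) + ∑ i, (A i i + lam) * d i := by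
  simp only [glassoObj, det_diagonal, trace, Matrix.diag, mul_diagonal, diagonal_apply,
    apply_ite abs, abs_zero, sum_ite_eq, mem_univ, if_true, abs_of_nonneg (hd _)]
  simp only [add_mul, sum_add_distrib, mul_sum]
  ring

end

theorem glasso_diagonal_solution_general
    (p : ℕ) (S : Matrix (Fin p) (Fin p) ℝ) (hS : S.PosSemidef)
    (lam : ℝ) (hlam : 0 < lam)
    (hsep : ∀ i j : Fin p, i ≠ j → |S i j| ≤ lam) :
    IsGlassoSol lam S (Matrix.diagonal fun i : Fin p => (S i i + lam)⁻¹) := by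
  have ha : ∀ i, 0 < S i i + lam := fun i => add_pos_of_nonneg_of_pos hS.diag_nonneg hlam
  refine ⟨.diagonal fun i => inv_pos.2 (ha i), fun Ψ hΨ => ?_⟩
  calc glassoObj lam S (diagonal fun i => (S i i + lam)⁻¹)
      = p + ∑ i, Real.log (S i i + lam) := by
        rw [glassoObj_diagonal lam S fun i => (inv_pos.2 (ha i)).le,
          Real.log_prod fun i _ => (inv_pos.2 (ha i)).ne']
        simp only [Real.log_inv, sum_neg_distrib, neg_neg, fun i => mul_inv_cancel₀ (ha i).ne',
          sum_const, card_univ, Fintype.card_fin, nsmul_eq_mul, mul_one]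
        ring
    _ ≤ ∑ i, (S i i + lam) * Ψ i i - Real.log Ψ.det := by
        simpa using hΨ.card_add_sum_log_le_sum_mul_diag_sub_log_det ha
    _ ≤ glassoObj lam S Ψ := by
        have := sum_add_mul_diag_le_trace_mul_add_sum_abs hsep fun i => hΨ.diag_pos.le
        unfold glassoObj
        linarith

/-- if all off-diagonal entries of `S` are at most `lam` in absolute value, then the
diagonal matrix with entries `1 / (S i i + lam)` is the graphical lasso solution at `lam`. -/
theorem glasso_diagonal_solution
    (p : ℕ) (hp : 1 ≤ p) (S : Matrix (Fin p) (Fin p) ℝ) (hS : S.PosSemidef)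
    (lam : ℝ) (hlam : 0 < lam)
    (hsep : ∀ i j : Fin p, i ≠ j → |S i j| ≤ lam) :
    IsGlassoSol lam S (Matrix.diagonal fun i : Fin p => (S i i + lam)⁻¹) :=
  glasso_diagonal_solution_general p S hS lam hlam hsep
end

section
/- Let λ > 0 and let Θ̂ be a graphical lasso solution at λ for S. Let V₁,…,V_K be the vertex sets of the connected components of the thresholded sample covariance graph G^(λ). Then Θ̂_ij = 0 whenever i and j lie in distinct components, and for each ℓ the principal submatrix Θ̂[V_ℓ, V_ℓ] is a graphical lasso solution at λ for the principal submatrix S[V_ℓ, V_ℓ]. -/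
/-!
Let `P` be a union of connected components of the thresholded covariance graph, so that
`|S i j| ≤ λ` whenever `i` and `j` lie on different sides of `P`. Zeroing the entries of `Θ̂`
that cross `P` keeps it positive definite and does not increase `tr(SΘ) + λ ∑ |Θ_ij|`, because
each crossing entry contributes `S_ij Θ_ji + λ |Θ_ji| ≥ 0`. By the strict Fischer inequality it
strictly increases `det`, unless the crossing block is already zero; minimality of `Θ̂` forces
this. Once `Θ̂` is block diagonal, the objective splits as the sum of the objectives of the two
diagonal blocks, so each block minimizes its own objective.
-/

open Matrix

namespace Matrix

variable {m n : Type*}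

theorem IsHermitian.eq_fromBlocks {α : Type*} [Star α] {M : Matrix (m ⊕ n) (m ⊕ n) α}
    (hM : M.IsHermitian) :
    M = Matrix.fromBlocks M.toBlocks₁₁ M.toBlocks₁₂ M.toBlocks₁₂ᴴ M.toBlocks₂₂ := by
  have h₂₁ : M.toBlocks₂₁ = M.toBlocks₁₂ᴴ := by
    ext i j
    exact (congrFun₂ hM (Sum.inr i) (Sum.inl j)).symm
  rw [← h₂₁, fromBlocks_toBlocks]

variable [Fintype m] [Fintype n]

theorem trace_fromBlocks {α : Type*} [AddCommMonoid α] (A : Matrix m m α) (B : Matrix m n α)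
    (C : Matrix n m α) (D : Matrix n n α) : (fromBlocks A B C D).trace = A.trace + D.trace := by
  simp [trace, Fintype.sum_sum_type]

theorem PosDef.eq_zero_of_conjTranspose_mul_mul_same_eq_zero {A : Matrix m m ℝ} (hA : A.PosDef)
    {B : Matrix m n ℝ} (h : Bᴴ * A * B = 0) : B = 0 := by
  refine ext_iff_mulVec.mpr fun x => ?_
  by_contra hx
  rw [zero_mulVec] at hx
  have hpos := hA.dotProduct_mulVec_pos hx
  rw [star_mulVec, ← dotProduct_mulVec, mulVec_mulVec, mulVec_mulVec, h, zero_mulVec,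
    dotProduct_zero] at hpos
  exact hpos.false

variable [DecidableEq m] [DecidableEq n]

theorem PosSemidef.one_lt_det_one_add {Y : Matrix n n ℝ} (hY : Y.PosSemidef) (hY0 : Y ≠ 0) :
    1 < (1 + Y).det := by
  set U := hY.1.eigenvectorUnitary
  set μ := hY.1.eigenvalues
  have hdet : (1 + Y).det = ∏ i, (1 + μ i) := by
    have hUU : (U : Matrix n n ℝ) * star (U : Matrix n n ℝ) = 1 := mem_unitaryGroup_iff.mp U.2
    conv_lhs => rw [hY.1.spectral_theorem, ← map_one (Unitary.conjStarAlgAut ℝ _ U), ← map_add]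
    rw [Unitary.conjStarAlgAut_apply, det_mul, det_mul, mul_right_comm, ← det_mul, hUU, det_one,
      one_mul, ← diagonal_one, diagonal_add, det_diagonal]
    simp [μ]
  obtain ⟨i₀, hi₀⟩ : ∃ i, μ i ≠ 0 := by
    by_contra! h
    exact hY0 (hY.1.eigenvalues_eq_zero_iff.mp (funext h))
  have hμ : ∀ i, 0 ≤ μ i := hY.eigenvalues_nonneg
  rw [hdet]
  calc (1 : ℝ) = ∏ _i : n, 1 := Finset.prod_const_one.symm
    _ < ∏ i, (1 + μ i) := Finset.prod_lt_prod (fun _ _ => one_pos)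
      (fun i _ => le_add_of_nonneg_right (hμ i))
      ⟨i₀, Finset.mem_univ _, lt_add_of_pos_right 1 ((hμ i₀).lt_of_ne' hi₀)⟩

theorem PosDef.det_lt_det_add {D X : Matrix n n ℝ} (hD : D.PosDef) (hX : X.PosSemidef)
    (hX0 : X ≠ 0) : D.det < (D + X).det := by
  obtain ⟨R, hR, hRR⟩ : ∃ R : Matrix n n ℝ, R.IsHermitian ∧ R * R = D := by
    open scoped MatrixOrder Matrix.Norms.L2Operator in
    exact ⟨CFC.sqrt D, (CFC.sqrt_nonneg D).posSemidef.1,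
      CFC.sqrt_mul_sqrt_self D hD.posSemidef.nonneg⟩
  have hRdet : IsUnit R.det := isUnit_iff_ne_zero.mpr fun h => hD.det_pos.ne' <| by
    rw [← hRR, det_mul, h, zero_mul]
  set Y := R⁻¹ * X * R⁻¹
  have hXY : X = R * Y * R := by
    simp only [Y, ← mul_assoc, mul_nonsing_inv _ hRdet, one_mul]
    rw [mul_assoc, nonsing_inv_mul _ hRdet, mul_one]
  have hY : Y.PosSemidef := by
    simpa only [hR.inv.eq] using hX.mul_mul_conjTranspose_same R⁻¹
  have hY0 : Y ≠ 0 := fun h => hX0 (by rw [hXY, h, mul_zero, zero_mul])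
  have hDX : D + X = R * (1 + Y) * R := by rw [mul_add, add_mul, mul_one, hRR, ← hXY]
  rw [hDX, det_mul, det_mul, mul_right_comm, ← det_mul, hRR]
  exact lt_mul_of_one_lt_right hD.det_pos (hY.one_lt_det_one_add hY0)

/-- The strict Fischer inequality. -/
theorem PosDef.det_fromBlocks_lt {A : Matrix m m ℝ} {B : Matrix m n ℝ} {D : Matrix n n ℝ}
    (hM : (fromBlocks A B Bᴴ D).PosDef) (hB : B ≠ 0) :
    (fromBlocks A B Bᴴ D).det < A.det * D.det := by
  have hA : A.PosDef := hM.submatrix Sum.inl_injective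
  let _ := hA.isUnit.invertible
  have hdet : (fromBlocks A B Bᴴ D).det = A.det * (D - Bᴴ * A⁻¹ * B).det := by
    rw [det_fromBlocks₁₁, invOf_eq_nonsing_inv]
  have hX : (Bᴴ * A⁻¹ * B).PosSemidef := hA.inv.posSemidef.conjTranspose_mul_mul_same B
  have hX0 : Bᴴ * A⁻¹ * B ≠ 0 := fun h =>
    hB (hA.inv.eq_zero_of_conjTranspose_mul_mul_same_eq_zero h)
  have hSchur : (D - Bᴴ * A⁻¹ * B).PosDef := by
    refine ((PosDef.fromBlocks₁₁ B D hA).mp hM.posSemidef).posDef_iff_det_ne_zero.mpr ?_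
    exact right_ne_zero_of_mul (hdet ▸ hM.det_pos.ne')
  rw [hdet]
  exact mul_lt_mul_of_pos_left (by simpa using hSchur.det_lt_det_add hX hX0) hA.det_pos

theorem PosDef.fromBlocks_zero {A : Matrix m m ℝ} {D : Matrix n n ℝ} (hA : A.PosDef)
    (hD : D.PosDef) : (fromBlocks A 0 0 D).PosDef := by
  let _ := hA.isUnit.invertible
  have hpsd : (fromBlocks A 0 0ᴴ D).PosSemidef :=
    (PosDef.fromBlocks₁₁ 0 D hA).mpr (by simpa using hD.posSemidef)
  rw [conjTranspose_zero] at hpsd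
  refine hpsd.posDef_iff_det_ne_zero.mpr ?_
  rw [det_fromBlocks_zero₂₁]
  exact mul_ne_zero hA.det_pos.ne' hD.det_pos.ne'

end Matrix

section GraphicalLasso

variable {m n : Type*} [Fintype m] [Fintype n] {lam : ℝ}

/-- Defined for rectangular `X`, so that it can be evaluated block by block. -/
noncomputable def glassoLinearPart (lam : ℝ) (S : Matrix m n ℝ) (X : Matrix n m ℝ) : ℝ :=
  (S * X).trace + lam * ∑ i, ∑ j, |X i j|

theorem glassoObj_eq_neg_log_det_add [DecidableEq n] (lam : ℝ) (S Θ : Matrix n n ℝ) :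
    glassoObj lam S Θ = -Real.log Θ.det + glassoLinearPart lam S Θ := by
  rw [glassoObj, glassoLinearPart, add_assoc]

@[simp]
theorem glassoLinearPart_zero (lam : ℝ) (S : Matrix m n ℝ) : glassoLinearPart lam S 0 = 0 := by
  simp [glassoLinearPart]

theorem glassoLinearPart_nonneg {S : Matrix m n ℝ} (hS : ∀ i j, |S i j| ≤ lam)
    (X : Matrix n m ℝ) : 0 ≤ glassoLinearPart lam S X := by
  have hsum : glassoLinearPart lam S X = ∑ i, ∑ j, (S i j * X j i + lam * |X j i|) := by
    simp only [glassoLinearPart, trace, diag, mul_apply, Finset.mul_sum, Finset.sum_add_distrib]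
    rw [Finset.sum_comm (f := fun i j => lam * |X i j|)]
  rw [hsum]
  refine Finset.sum_nonneg fun i _ => Finset.sum_nonneg fun j _ => ?_
  have : |S i j * X j i| ≤ lam * |X j i| := by
    rw [abs_mul]
    exact mul_le_mul_of_nonneg_right (hS i j) (abs_nonneg _)
  linarith [neg_abs_le (S i j * X j i)]

theorem glassoLinearPart_fromBlocks (lam : ℝ) (S : Matrix (m ⊕ n) (m ⊕ n) ℝ)
    (A : Matrix m m ℝ) (B : Matrix m n ℝ) (C : Matrix n m ℝ) (D : Matrix n n ℝ) :
    glassoLinearPart lam S (fromBlocks A B C D) =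
      glassoLinearPart lam S.toBlocks₁₁ A + glassoLinearPart lam S.toBlocks₂₁ B +
        glassoLinearPart lam S.toBlocks₁₂ C + glassoLinearPart lam S.toBlocks₂₂ D := by
  conv_lhs => rw [← fromBlocks_toBlocks S]
  simp only [glassoLinearPart, fromBlocks_multiply, trace_fromBlocks, trace_add,
    Fintype.sum_sum_type, fromBlocks_apply₁₁, fromBlocks_apply₁₂, fromBlocks_apply₂₁,
    fromBlocks_apply₂₂, Finset.sum_add_distrib]
  ring

variable [DecidableEq m] [DecidableEq n]

theorem glassoObj_submatrix_equiv (lam : ℝ) (S Θ : Matrix n n ℝ) (e : m ≃ n) :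
    glassoObj lam (S.submatrix e e) (Θ.submatrix e e) = glassoObj lam S Θ := by
  have htrace : ((S * Θ).submatrix e e).trace = (S * Θ).trace :=
    e.sum_comp fun i => (S * Θ) i i
  have habs : ∑ i, ∑ j, |Θ (e i) (e j)| = ∑ i, ∑ j, |Θ i j| := by
    simp only [fun i => e.sum_comp fun j => |Θ i j|]
    exact e.sum_comp fun i => ∑ j, |Θ i j|
  simp only [glassoObj, det_submatrix_equiv_self, submatrix_mul_equiv, htrace, submatrix_apply,
    habs]

theorem glassoObj_fromBlocks_zero (lam : ℝ) (S : Matrix (m ⊕ n) (m ⊕ n) ℝ) {A : Matrix m m ℝ}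
    {D : Matrix n n ℝ} (hA : A.det ≠ 0) (hD : D.det ≠ 0) :
    glassoObj lam S (fromBlocks A 0 0 D) =
      glassoObj lam S.toBlocks₁₁ A + glassoObj lam S.toBlocks₂₂ D := by
  simp only [glassoObj_eq_neg_log_det_add, glassoLinearPart_fromBlocks, glassoLinearPart_zero,
    det_fromBlocks_zero₂₁, Real.log_mul hA hD]
  ring

theorem IsGlassoSol.submatrix_equiv {S Θ : Matrix n n ℝ} (hΘ : IsGlassoSol lam S Θ)
    (e : m ≃ n) : IsGlassoSol lam (S.submatrix e e) (Θ.submatrix e e) := by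
  refine ⟨hΘ.1.submatrix e.injective, fun Ψ hΨ => ?_⟩
  have h := hΘ.2 (Ψ.submatrix e.symm e.symm) (hΨ.submatrix e.symm.injective)
  rwa [← glassoObj_submatrix_equiv lam S Θ e, ← glassoObj_submatrix_equiv lam S _ e,
    submatrix_submatrix, e.symm_comp_self, submatrix_id_id] at h

theorem IsGlassoSol.toBlocks₁₂_eq_zero {S Θ : Matrix (m ⊕ n) (m ⊕ n) ℝ}
    (hΘ : IsGlassoSol lam S Θ) (h₁₂ : ∀ i j, |S.toBlocks₁₂ i j| ≤ lam)
    (h₂₁ : ∀ i j, |S.toBlocks₂₁ i j| ≤ lam) : Θ.toBlocks₁₂ = 0 := by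
  by_contra hB
  obtain ⟨hpd, hmin⟩ := hΘ
  have hΘ := hpd.1.eq_fromBlocks
  set A := Θ.toBlocks₁₁
  set B := Θ.toBlocks₁₂
  set D := Θ.toBlocks₂₂
  rw [hΘ] at hpd
  have hA : A.PosDef := hpd.submatrix Sum.inl_injective
  have hD : D.PosDef := hpd.submatrix Sum.inr_injective
  have hle := hmin _ (hA.fromBlocks_zero hD)
  have hlog := Real.log_lt_log hpd.det_pos (hpd.det_fromBlocks_lt hB)
  rw [← det_fromBlocks_zero₂₁ A 0 D] at hlog
  rw [hΘ, glassoObj_eq_neg_log_det_add, glassoObj_eq_neg_log_det_add, glassoLinearPart_fromBlocks, glassoLinearPart_fromBlocks,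
    glassoLinearPart_zero, glassoLinearPart_zero] at hle
  linarith [glassoLinearPart_nonneg h₂₁ B, glassoLinearPart_nonneg h₁₂ Bᴴ]

theorem IsGlassoSol.toBlocks₁₁ {S Θ : Matrix (m ⊕ n) (m ⊕ n) ℝ} (hΘ : IsGlassoSol lam S Θ)
    (h : Θ.toBlocks₁₂ = 0) : IsGlassoSol lam S.toBlocks₁₁ Θ.toBlocks₁₁ := by
  obtain ⟨hpd, hmin⟩ := hΘ
  have hΘ := hpd.1.eq_fromBlocks
  rw [h, conjTranspose_zero] at hΘ
  set A := Θ.toBlocks₁₁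
  set D := Θ.toBlocks₂₂
  rw [hΘ] at hpd
  have hA : A.PosDef := hpd.submatrix Sum.inl_injective
  have hD : D.PosDef := hpd.submatrix Sum.inr_injective
  refine ⟨hA, fun Ψ hΨ => ?_⟩
  have hle := hmin _ (hΨ.fromBlocks_zero hD)
  rw [hΘ, glassoObj_fromBlocks_zero lam S hA.det_pos.ne' hD.det_pos.ne',
    glassoObj_fromBlocks_zero lam S hΨ.det_pos.ne' hD.det_pos.ne'] at hle
  linarith

end GraphicalLasso

section Separated

variable {n : Type*} [Fintype n] [DecidableEq n] {lam : ℝ} {S Θ : Matrix n n ℝ}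
  (P : n → Prop) [DecidablePred P]

theorem IsGlassoSol.apply_eq_zero_of_separated (hΘ : IsGlassoSol lam S Θ)
    (hS : ∀ i j, P i → ¬P j → |S i j| ≤ lam ∧ |S j i| ≤ lam) {i j : n} (hi : P i) (hj : ¬P j) :
    Θ i j = 0 :=
  congrFun₂ ((hΘ.submatrix_equiv (Equiv.sumCompl P)).toBlocks₁₂_eq_zero
    (fun a b => (hS _ _ a.2 b.2).1) (fun a b => (hS _ _ b.2 a.2).2)) ⟨i, hi⟩ ⟨j, hj⟩

theorem IsGlassoSol.submatrix_of_separated (hΘ : IsGlassoSol lam S Θ)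
    (hS : ∀ i j, P i → ¬P j → |S i j| ≤ lam ∧ |S j i| ≤ lam) :
    IsGlassoSol lam (S.submatrix (Subtype.val : {i // P i} → n) Subtype.val)
      (Θ.submatrix Subtype.val Subtype.val) := by
  have hΘP := hΘ.submatrix_equiv (Equiv.sumCompl P)
  exact hΘP.toBlocks₁₁ (hΘP.toBlocks₁₂_eq_zero (fun a b => (hS _ _ a.2 b.2).1)
    (fun a b => (hS _ _ b.2 a.2).2))

end Separated

theorem covGraph_abs_le_of_not_reachable {n : Type*} {lam : ℝ} {S : Matrix n n ℝ} {i j : n}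
    (h : ¬(covGraph lam S).Reachable i j) : |S i j| ≤ lam := by
  by_contra! hlt
  have hij : i ≠ j := by
    rintro rfl
    exact h .rfl
  exact h (SimpleGraph.Adj.reachable (by simp [covGraph, hij, hlt]))

open Classical in
theorem glasso_splits_along_cov_components_general
    (p : ℕ) (S : Matrix (Fin p) (Fin p) ℝ)
    (lam : ℝ)
    (Θ : Matrix (Fin p) (Fin p) ℝ) (hΘ : IsGlassoSol lam S Θ) :
    (∀ i j : Fin p, ¬ (covGraph lam S).Reachable i j → Θ i j = 0) ∧
    (∀ v : Fin p,
      IsGlassoSol lam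
        (S.submatrix (Subtype.val : {i : Fin p // (covGraph lam S).Reachable v i} → Fin p)
          Subtype.val)
        (Θ.submatrix (Subtype.val : {i : Fin p // (covGraph lam S).Reachable v i} → Fin p)
          Subtype.val)) := by
  have hsep : ∀ v i j, (covGraph lam S).Reachable v i → ¬(covGraph lam S).Reachable v j →
      |S i j| ≤ lam ∧ |S j i| ≤ lam := fun v i j hi hj =>
    ⟨covGraph_abs_le_of_not_reachable fun h => hj (hi.trans h),
      covGraph_abs_le_of_not_reachable fun h => hj (hi.trans h.symm)⟩
  exact ⟨fun i j h => hΘ.apply_eq_zero_of_separated _ (hsep i) .rfl h,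
    fun v => hΘ.submatrix_of_separated _ (hsep v)⟩

open Classical in
/-- the graphical lasso solution vanishes across distinct connected components of
the thresholded sample covariance graph, and on each component (the reachability class of any
vertex `v`) its principal submatrix solves the graphical lasso problem for the corresponding
principal submatrix of `S`. -/
theorem glasso_splits_along_cov_components
    (p : ℕ) (hp : 1 ≤ p) (S : Matrix (Fin p) (Fin p) ℝ) (hS : S.PosSemidef)
    (lam : ℝ) (hlam : 0 < lam)
    (Θ : Matrix (Fin p) (Fin p) ℝ) (hΘ : IsGlassoSol lam S Θ) :
    (∀ i j : Fin p, ¬ (covGraph lam S).Reachable i j → Θ i j = 0) ∧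
    (∀ v : Fin p,
      IsGlassoSol lam
        (S.submatrix (Subtype.val : {i : Fin p // (covGraph lam S).Reachable v i} → Fin p)
          Subtype.val)
        (Θ.submatrix (Subtype.val : {i : Fin p // (covGraph lam S).Reachable v i} → Fin p)
          Subtype.val)) :=
  glasso_splits_along_cov_components_general p S lam Θ hΘ
end
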